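/- arXiv:1810.01542 — 10 statements merged into one kernel-verified Lean document; each statement's English description precedes it below -/
import Mathlib

section
/- Let G be a graph on n ≥ 2 vertices and let G′ be the graph obtained from G by subdividing every edge of G exactly once. Then G has a Hamiltonian path if and only if G′ contains an induced path on 2n−1 vertices (equivalently, an induced path of length 2n−2). -/
/-!
A Hamiltonian path `v₀ v₁ … vₙ₋₁` of `G` with every edge replaced by its subdivision vertex is
an induced path `v₀ e₁ v₁ … eₙ₋₁ vₙ₋₁` on `2n - 1` vertices of `G′`, since `vᵢ` lies on no edge of
the path other than `eᵢ` and `eᵢ₊₁`.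

Conversely, `G′` is bipartite between old and subdivision vertices, so a path in it alternates.
If a path on `2n - 1` vertices starts at an old vertex, its `n` old vertices are all of `V`, and
consecutive ones are joined by the edge subdivided between them. If an induced one starts at a
subdivision vertex `e`, prepend the other end `w` of `e` and drop the last vertex: `w` is not on
the path because the path is induced, so this gives a path of the first kind.
-/

open SimpleGraph

/-- The graph obtained from `G` by subdividing every edge exactly once: its vertices are the
vertices of `G` together with one new vertex for each edge of `G`, and each new vertex `e`
is adjacent exactly to the two end-vertices of the edge `e`. -/
def subdiv {V : Type} (G : SimpleGraph V) : SimpleGraph (V ⊕ G.edgeSet) :=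
  SimpleGraph.fromRel (fun a b =>
    match a, b with
    | Sum.inl u, Sum.inr e => u ∈ (e : Sym2 V)
    | _, _ => False)

/-- `G` has a Hamiltonian path: a path visiting every vertex of `G` exactly once. -/
def HasHamPath {V : Type} (G : SimpleGraph V) : Prop :=
  ∃ (u v : V) (w : G.Walk u v), w.IsPath ∧ ∀ x : V, x ∈ w.support

section Subdivision

variable {V : Type} {G : SimpleGraph V}

@[simp]
lemma subdiv_adj_inl_inl (u v : V) : ¬ (subdiv G).Adj (.inl u) (.inl v) := by
  simp [subdiv]

@[simp]
lemma subdiv_adj_inr_inr (e e' : G.edgeSet) : ¬ (subdiv G).Adj (.inr e) (.inr e') := by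
  simp [subdiv]

@[simp]
lemma subdiv_adj_inl_inr (u : V) (e : G.edgeSet) :
    (subdiv G).Adj (.inl u) (.inr e) ↔ u ∈ (e : Sym2 V) := by
  simp [subdiv]

@[simp]
lemma subdiv_adj_inr_inl (u : V) (e : G.edgeSet) :
    (subdiv G).Adj (.inr e) (.inl u) ↔ u ∈ (e : Sym2 V) := by
  simp [subdiv]

lemma isLeft_eq_not_of_subdiv_adj {x y : V ⊕ G.edgeSet} (h : (subdiv G).Adj x y) :
    y.isLeft = !x.isLeft := by
  cases x <;> cases y <;> simp_all

lemma adj_of_subdiv_adj_of_subdiv_adj {u v : V} {x : V ⊕ G.edgeSet}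
    (hu : (subdiv G).Adj (.inl u) x) (hv : (subdiv G).Adj x (.inl v)) (huv : u ≠ v) :
    G.Adj u v := by
  cases x with
  | inl => simp at hu
  | inr e =>
    have he : (e : Sym2 V) = s(u, v) :=
      (Sym2.mem_and_mem_iff huv).1 ⟨by simpa using hu, by simpa using hv⟩
    exact G.mem_edgeSet.1 (he ▸ e.2)

end Subdivision

section PathGraph

variable {V : Type} {G : SimpleGraph V}

lemma hasHamPath_iff_exists_bijective_hom :
    HasHamPath G ↔ ∃ (k : ℕ) (g : pathGraph (k + 1) →g G), Function.Bijective g := by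
  constructor
  · rintro ⟨u, v, p, hp, hmem⟩
    refine ⟨p.length, p.pathGraphHom, fun i j hij => ?_, fun x => ?_⟩
    · exact Fin.ext (hp.support_nodup.getElem_inj_iff.1 hij)
    · obtain ⟨i, hi, rfl⟩ := List.mem_iff_getElem.1 (hmem x)
      exact ⟨⟨i, by simpa using hi⟩, rfl⟩
  · rintro ⟨k, g, hg⟩
    have hchain : (List.ofFn g).IsChain G.Adj :=
      List.isChain_ofFn.2 fun i hi => g.map_adj (by simp [pathGraph_adj])
    refine ⟨_, _, Walk.ofSupport _ (by simp) hchain, ?_, fun x => ?_⟩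
    · rw [Walk.isPath_def, Walk.support_ofSupport]
      exact List.nodup_ofFn.2 hg.1
    · rw [Walk.support_ofSupport, List.mem_ofFn']
      exact hg.2 x

def pathGraphCastSuccEmbedding (n : ℕ) : pathGraph n ↪g pathGraph (n + 1) where
  toEmbedding := Fin.castSuccEmb
  map_rel_iff' := by simp [pathGraph_adj]

variable {W : Type} {H : SimpleGraph W}

def SimpleGraph.Hom.pathGraphCons {n : ℕ} (f : pathGraph (n + 1) →g H) {x : W}
    (hx : H.Adj x (f 0)) : pathGraph (n + 2) →g H where
  toFun := Fin.cons x f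
  map_rel' {i j} h := by
    rw [pathGraph_adj] at h
    cases i using Fin.cases with
    | zero =>
      cases j using Fin.cases with
      | zero => simp at h
      | succ j =>
        obtain rfl : j = 0 := Fin.ext (by simp at h; omega)
        simpa using hx
    | succ i =>
      cases j using Fin.cases with
      | zero =>
        obtain rfl : i = 0 := Fin.ext (by simp at h; omega)
        simpa using hx.symm
      | succ j => simpa using f.map_adj (pathGraph_adj.2 (by simpa using h))

end PathGraph

section SubdividedPath

variable {V : Type} {G : SimpleGraph V} {k : ℕ}

def subdivPath (g : pathGraph (k + 1) →g G) (j : Fin (2 * k + 1)) : V ⊕ G.edgeSet :=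
  if h : (j : ℕ) % 2 = 0 then .inl (g ⟨j / 2, by omega⟩)
  else .inr ⟨s(g ⟨j / 2, by omega⟩, g ⟨j / 2 + 1, by omega⟩),
    g.map_adj (by simp [pathGraph_adj])⟩

lemma subdivPath_injective {g : pathGraph (k + 1) →g G} (hg : Function.Injective g) :
    Function.Injective (subdivPath g) := by
  intro i j hij
  unfold subdivPath at hij
  split_ifs at hij <;> simp [hg.eq_iff, Subtype.ext_iff] at hij <;> ext <;> omega

lemma subdiv_adj_subdivPath_iff {g : pathGraph (k + 1) →g G} (hg : Function.Injective g)
    (i j : Fin (2 * k + 1)) :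
    (subdiv G).Adj (subdivPath g i) (subdivPath g j) ↔ (pathGraph (2 * k + 1)).Adj i j := by
  unfold subdivPath
  rw [pathGraph_adj]
  split_ifs <;> simp [hg.eq_iff, Sym2.mem_iff] <;> omega

def subdivPathEmbedding {g : pathGraph (k + 1) →g G} (hg : Function.Injective g) :
    pathGraph (2 * k + 1) ↪g subdiv G where
  toFun := subdivPath g
  inj' := subdivPath_injective hg
  map_rel_iff' := subdiv_adj_subdivPath_iff hg _ _

end SubdividedPath

section PathInSubdivision

variable {V : Type} {G : SimpleGraph V}

lemma isLeft_apply_iff_even {n : ℕ} (f : pathGraph (n + 1) →g subdiv G) (h0 : (f 0).isLeft)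
    (j : Fin (n + 1)) : (f j).isLeft ↔ Even (j : ℕ) := by
  obtain ⟨j, hj⟩ := j
  induction j with
  | zero => simpa using h0
  | succ j ih =>
    have hadj := f.map_adj (pathGraph_adj.2 (.inl rfl) :
      (pathGraph (n + 1)).Adj ⟨j, by omega⟩ ⟨j + 1, hj⟩)
    rw [isLeft_eq_not_of_subdiv_adj hadj, Nat.even_add_one, ← ih (by omega)]
    simp

lemma exists_injective_hom_of_subdiv {k : ℕ} (f : pathGraph (2 * k + 1) →g subdiv G)
    (hf : Function.Injective f) (h0 : (f 0).isLeft) :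
    ∃ g : pathGraph (k + 1) →g G, Function.Injective g := by
  have hleft : ∀ i : Fin (k + 1), ∃ v, f ⟨2 * i, by omega⟩ = .inl v := fun i =>
    Sum.isLeft_iff.1 ((isLeft_apply_iff_even f h0 _).2 (even_two_mul _))
  choose g hg using hleft
  have hg_inj : Function.Injective g := fun i j hij => by
    have := hf ((hg i).trans (hij ▸ (hg j).symm))
    ext; simpa using this
  have hg_adj (i j : Fin (k + 1)) (hij : (i : ℕ) + 1 = j) : G.Adj (g i) (g j) := by
    refine adj_of_subdiv_adj_of_subdiv_adj (x := f ⟨2 * i + 1, by omega⟩) ?_ ?_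
      (hg_inj.ne (by simp [Fin.ext_iff]; omega))
    · rw [← hg]; exact f.map_adj (by simp [pathGraph_adj])
    · rw [← hg]; exact f.map_adj (by simp [pathGraph_adj]; omega)
  refine ⟨⟨g, fun {i j} hij => ?_⟩, hg_inj⟩
  rcases pathGraph_adj.1 hij with h | h
  exacts [hg_adj i j h, (hg_adj j i h).symm]

lemma exists_injective_hom_isLeft_zero {m : ℕ} (f : pathGraph (m + 2) ↪g subdiv G) :
    ∃ f' : pathGraph (m + 2) →g subdiv G, Function.Injective f' ∧ (f' 0).isLeft := by
  by_cases h0 : (f 0).isLeft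
  · exact ⟨f.toHom, f.injective, h0⟩
  obtain ⟨e, he⟩ : ∃ e, f 0 = .inr e := Sum.isRight_iff.1 (by simpa using h0)
  have h01 : (pathGraph (m + 2)).Adj 0 1 := by simp [pathGraph_adj]
  obtain ⟨u, hu⟩ : ∃ u, f 1 = .inl u :=
    Sum.isLeft_iff.1 (by simpa [he] using isLeft_eq_not_of_subdiv_adj (f.map_adj_iff.2 h01))
  obtain ⟨w, hw⟩ : ∃ w, (e : Sym2 V) = s(u, w) :=
    Sym2.mem_iff_exists.1 (by simpa [he, hu] using f.map_adj_iff.2 h01)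
  have huw : G.Adj u w := G.mem_edgeSet.1 (hw ▸ e.2)
  have hw0 : (subdiv G).Adj (.inl w) (f 0) := by simp [he, hw]
  have hw_notMem : .inl w ∉ Set.range f := by
    rintro ⟨j, hj⟩
    obtain rfl : j = 1 := by
      have := f.map_rel_iff.1 (hj ▸ hw0)
      simp [pathGraph_adj] at this
      simpa [Fin.ext_iff] using this.symm
    exact huw.ne (Sum.inl_injective (hu.symm.trans hj))
  refine ⟨(f.toHom.pathGraphCons hw0).comp (pathGraphCastSuccEmbedding _).toHom,
    (Fin.cons_injective_iff.2 ⟨hw_notMem, f.injective⟩).comp (Fin.castSucc_injective _), ?_⟩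
  simp [SimpleGraph.Hom.pathGraphCons, pathGraphCastSuccEmbedding]

end PathInSubdivision

theorem stmt_0 {V : Type} [Fintype V] (G : SimpleGraph V) (hn : 2 ≤ Fintype.card V) :
    HasHamPath G ↔
      Nonempty (pathGraph (2 * Fintype.card V - 1) ↪g subdiv G) := by
  obtain ⟨k, hk⟩ : ∃ k, Fintype.card V = k + 2 := ⟨_, (Nat.sub_add_cancel hn).symm⟩
  rw [hk, show 2 * (k + 2) - 1 = 2 * (k + 1) + 1 by omega, hasHamPath_iff_exists_bijective_hom]
  constructor
  · rintro ⟨k', g, hg⟩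
    obtain rfl : k' = k + 1 := by
      simpa [hk] using Fintype.card_congr (Equiv.ofBijective g hg)
    exact ⟨subdivPathEmbedding hg.1⟩
  · rintro ⟨f⟩
    obtain ⟨f', hf', h0⟩ := exists_injective_hom_isLeft_zero f
    obtain ⟨g, hg⟩ := exists_injective_hom_of_subdiv (k := k + 1) f' hf' h0
    exact ⟨k + 1, g, (Fintype.bijective_iff_injective_and_card g).2 ⟨hg, by simp [hk]⟩⟩
end

section
/- Let G be a graph on n ≥ 2 vertices. Then G has a Hamiltonian path if and only if the line graph L(G) contains an induced path on n−1 vertices. -/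
open SimpleGraph

/-!
A Hamiltonian path `v₀ v₁ … v_{n-1}` gives the edges `vᵢvᵢ₊₁`, an induced path on `n - 1`
vertices of `L(G)`: as the `vᵢ` are distinct, two of these edges meet only when consecutive.
Conversely, let `e₀, …, e_{n-2}` induce a path in `L(G)` and let `a` be an end of `e₀` lying on no
other `eᵢ`. The other end `b` of `e₀` then lies on `e₁` and on no later `eᵢ`, so by induction there
is a path from `b` along `e₁, e₂, …` inside `⋃_{i ≥ 1} eᵢ`, which avoids `a`. Prepending `e₀` gives
a path with `n - 1` edges, that is, through all `n` vertices.
-/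

lemma Sym2.exists_mem_notMem_of_ne {α : Type*} {z z' : Sym2 α} (hz : ¬ z.IsDiag) (h : z ≠ z') :
    ∃ a ∈ z, a ∉ z' := by
  induction z using Sym2.ind with
  | _ x y =>
    by_contra! hall
    exact h (Sym2.eq_of_ne_mem (Sym2.mk_isDiag_iff.not.mp hz) (Sym2.mem_mk_left x y)
      (Sym2.mem_mk_right x y) (hall x (Sym2.mem_mk_left x y)) (hall y (Sym2.mem_mk_right x y)))

namespace SimpleGraph

variable {V : Type*} {G : SimpleGraph V}

def pathGraph.succEmbedding (m : ℕ) : pathGraph m ↪g pathGraph (m + 1) where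
  toFun := Fin.succ
  inj' := Fin.succ_injective m
  map_rel_iff' := by simp [pathGraph_adj]

namespace Embedding

variable {W : Type*} {H : SimpleGraph W} (f : H ↪g G.lineGraph)

lemma exists_mem_mem_of_adj {i j : W} (h : H.Adj i j) :
    ∃ x, x ∈ (f i : Sym2 V) ∧ x ∈ (f j : Sym2 V) :=
  (lineGraph_adj_iff_exists.mp (f.map_rel_iff.mpr h)).2

lemma eq_or_adj_of_mem_mem {i j : W} {x : V} (hi : x ∈ (f i : Sym2 V))
    (hj : x ∈ (f j : Sym2 V)) : i = j ∨ H.Adj i j := by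
  by_cases hij : i = j
  · exact .inl hij
  · exact .inr (f.map_rel_iff.mp (lineGraph_adj_iff_exists.mpr ⟨f.injective.ne hij, x, hi, hj⟩))

end Embedding

namespace Walk.IsPath

variable {u v : V} {w : G.Walk u v}

lemma getVert_inj (hw : w.IsPath) {k l : ℕ} (hk : k ≤ w.length) (hl : l ≤ w.length) :
    w.getVert k = w.getVert l ↔ k = l :=
  ⟨fun h => hw.getVert_injOn hk hl h, congrArg w.getVert⟩

lemma exists_mem_mem_getVert_iff (hw : w.IsPath) {i j : ℕ} (hi : i < w.length)
    (hj : j < w.length) :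
    (∃ x, x ∈ s(w.getVert i, w.getVert (i + 1)) ∧ x ∈ s(w.getVert j, w.getVert (j + 1))) ↔
      i ≤ j + 1 ∧ j ≤ i + 1 := by
  constructor
  · rintro ⟨x, hxi, hxj⟩
    rw [Sym2.mem_iff] at hxi hxj
    rcases hxi with rfl | rfl <;> rcases hxj with h | h <;>
      have := (hw.getVert_inj (by omega) (by omega)).mp h <;> omega
  · intro h
    obtain rfl | rfl | rfl : i = j ∨ i = j + 1 ∨ j = i + 1 := by omega
    · exact ⟨w.getVert i, by simp⟩
    · exact ⟨w.getVert (j + 1), by simp⟩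
    · exact ⟨w.getVert (i + 1), by simp⟩

lemma getVert_edge_inj (hw : w.IsPath) {i j : ℕ} (hi : i < w.length) (hj : j < w.length)
    (h : s(w.getVert i, w.getVert (i + 1)) = s(w.getVert j, w.getVert (j + 1))) : i = j := by
  rcases Sym2.eq_iff.mp h with ⟨h₁, -⟩ | ⟨h₁, h₂⟩
  · exact (hw.getVert_inj (by omega) (by omega)).mp h₁
  · have := (hw.getVert_inj (by omega) (by omega)).mp h₁
    have := (hw.getVert_inj (by omega) (by omega)).mp h₂
    omega

def lineGraphEmbedding (hw : w.IsPath) : pathGraph w.length ↪g G.lineGraph where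
  toFun i := ⟨s(w.getVert i, w.getVert (i + 1)), G.mem_edgeSet.mpr (w.adj_getVert_succ i.2)⟩
  inj' i j h := Fin.ext (hw.getVert_edge_inj i.2 j.2 (congrArg Subtype.val h))
  map_rel_iff' {i j} := by
    show G.lineGraph.Adj ⟨_, _⟩ ⟨_, _⟩ ↔ _
    have hinj : s(w.getVert i, w.getVert (i + 1)) = s(w.getVert j, w.getVert (j + 1)) ↔ i = j :=
      ⟨fun h => Fin.ext (hw.getVert_edge_inj i.2 j.2 h), fun h => h ▸ rfl⟩
    rw [lineGraph_adj_iff_exists, pathGraph_adj, ne_eq, Subtype.mk.injEq, hinj,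
      hw.exists_mem_mem_getVert_iff i.2 j.2, Fin.ext_iff]
    omega

lemma mem_support_of_length_add_one_eq [Fintype V] (hw : w.IsPath)
    (hlen : w.length + 1 = Fintype.card V) (x : V) : x ∈ w.support := by
  classical
  have huniv : w.support.toFinset = Finset.univ := Finset.eq_univ_of_card _ <| by
    rw [List.toFinset_card_of_nodup hw.support_nodup, w.length_support, hlen]
  rw [← List.mem_toFinset, huniv]
  exact Finset.mem_univ x

end Walk.IsPath

lemma Embedding.exists_mem_iff_val_eq_zero [Nonempty V] :
    ∀ {m : ℕ} (f : pathGraph m ↪g G.lineGraph), ∃ a : V, ∀ i, a ∈ (f i : Sym2 V) ↔ i.val = 0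
  | 0, _ => ⟨Classical.arbitrary V, fun i => i.elim0⟩
  | m + 1, f => by
    obtain ⟨a, ha0, ha1⟩ : ∃ a ∈ (f 0 : Sym2 V),
        ∀ j : Fin (m + 1), j.val = 1 → a ∉ (f j : Sym2 V) := by
      rcases Nat.eq_zero_or_pos m with rfl | hm
      · exact ⟨_, Sym2.out_fst_mem _, fun j hj => by omega⟩
      · have h01 : (f 0 : Sym2 V) ≠ f ⟨1, by omega⟩ :=
          Subtype.coe_ne_coe.mpr (f.injective.ne (by simp [Fin.ext_iff]))
        obtain ⟨a, ha0, ha1⟩ :=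
          Sym2.exists_mem_notMem_of_ne (G.not_isDiag_of_mem_edgeSet (f 0).2) h01
        exact ⟨a, ha0, fun j hj => (Fin.ext hj : j = ⟨1, _⟩) ▸ ha1⟩
    refine ⟨a, fun i => ⟨fun hi => ?_, fun hi => (Fin.ext hi : i = 0) ▸ ha0⟩⟩
    rcases f.eq_or_adj_of_mem_mem ha0 hi with h | h
    · simp [← h]
    · rw [pathGraph_adj] at h
      exact absurd hi (ha1 i (by rw [Fin.val_zero] at h; omega))

lemma exists_isPath_of_pathGraph_embedding :
    ∀ {m : ℕ} (f : pathGraph m ↪g G.lineGraph) {a : V}, (∀ i, a ∈ (f i : Sym2 V) ↔ i.val = 0) →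
      ∃ (b : V) (w : G.Walk a b), w.IsPath ∧ w.length = m ∧
        ∀ x ∈ w.support, x ≠ a → ∃ i, x ∈ (f i : Sym2 V)
  | 0, _, a, _ => ⟨a, .nil, .nil, rfl, by simp⟩
  | m + 1, f, a, ha => by
    have ha0 : a ∈ (f 0 : Sym2 V) := (ha 0).mpr rfl
    set b := Sym2.Mem.other ha0
    have hab : G.Adj a b := by
      rw [← G.mem_edgeSet, Sym2.other_spec]; exact (f 0).2
    have hb (i : Fin m) : b ∈ (f i.succ : Sym2 V) ↔ i.val = 0 := by
      constructor
      · intro hi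
        rcases f.eq_or_adj_of_mem_mem (Sym2.other_mem ha0) hi with h | h
        · exact absurd h.symm (Fin.succ_ne_zero i)
        · rw [pathGraph_adj, Fin.val_succ, Fin.val_zero] at h
          omega
      · intro hi
        obtain ⟨x, hx0, hx1⟩ := f.exists_mem_mem_of_adj (i := 0) (j := i.succ)
          (by rw [pathGraph_adj]; simp [hi])
        rw [← Sym2.other_spec ha0, Sym2.mem_iff] at hx0
        rcases hx0 with rfl | rfl
        · exact absurd ((ha _).mp hx1) (by simp)
        · exact hx1
    obtain ⟨c, w, hw, hlen, hsupp⟩ :=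
      exists_isPath_of_pathGraph_embedding (f.comp (pathGraph.succEmbedding m)) hb
    have ha_notin : a ∉ w.support := fun h => by
      obtain ⟨i, hi⟩ := hsupp a h hab.ne
      exact absurd ((ha i.succ).mp hi) (by simp)
    refine ⟨c, .cons hab w, hw.cons ha_notin, by simp [hlen], fun x hx hxa => ?_⟩
    rw [Walk.support_cons, List.mem_cons] at hx
    have hxw := hx.resolve_left hxa
    by_cases hxb : x = b
    · exact ⟨0, hxb ▸ Sym2.other_mem ha0⟩
    · obtain ⟨i, hi⟩ := hsupp x hxw hxb
      exact ⟨i.succ, hi⟩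

end SimpleGraph

theorem stmt_2 {V : Type} [Fintype V] (G : SimpleGraph V) (hn : 2 ≤ Fintype.card V) :
    HasHamPath G ↔
      Nonempty (pathGraph (Fintype.card V - 1) ↪g G.lineGraph) := by
  classical
  constructor
  · rintro ⟨u, v, w, hw, hall⟩
    rw [← (hw.isHamiltonian_of_mem hall).length_eq]
    exact ⟨hw.lineGraphEmbedding⟩
  · rintro ⟨f⟩
    have : Nonempty V := Fintype.card_pos_iff.mp (by omega)
    obtain ⟨a, ha⟩ := f.exists_mem_iff_val_eq_zero
    obtain ⟨b, w, hw, hlen, -⟩ := exists_isPath_of_pathGraph_embedding f ha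
    exact ⟨a, b, w, hw, hw.mem_support_of_length_add_one_eq (by omega)⟩
end

section
/- For every integer k ≥ 3 and every graph G: G contains P_k as a contraction if and only if G has a P_k-suitable pair of vertices. -/
open SimpleGraph

/-- `f` is an `H`-witness structure of `G`: every bag `f x` is nonempty and induces a connected
subgraph of `G`, the bags partition the vertex set of `G`, and for distinct `x`, `y` there is
an edge of `G` between the bags `f x` and `f y` if and only if `x` and `y` are adjacent in `H`. -/
def IsWitnessStructure {V W : Type} (G : SimpleGraph V) (H : SimpleGraph W)
    (f : W → Set V) : Prop :=
  (∀ x, (f x).Nonempty) ∧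
  (∀ x, (G.induce (f x)).Connected) ∧
  (∀ v : V, ∃! x, v ∈ f x) ∧
  (∀ x y, x ≠ y → ((∃ a ∈ f x, ∃ b ∈ f y, G.Adj a b) ↔ H.Adj x y))

/-- `G` contains `H` as a contraction: `G` has an `H`-witness structure. -/
def ContainsAsContraction {V W : Type} (G : SimpleGraph V) (H : SimpleGraph W) : Prop :=
  ∃ f : W → Set V, IsWitnessStructure G H f

/-- `(u, v)` is a `P_k`-suitable pair of `G`: `G` has a `P_k`-witness structure whose bag
at the first vertex of the path is `{u}` and whose bag at the last vertex is `{v}`. -/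
def PkSuitable {V : Type} (k : ℕ) (G : SimpleGraph V) (u v : V) : Prop :=
  ∃ f : Fin k → Set V, IsWitnessStructure G (pathGraph k) f ∧
    (∀ i : Fin k, (i : ℕ) = 0 → f i = {u}) ∧
    (∀ i : Fin k, (i : ℕ) = k - 1 → f i = {v})

/-!
Shrink the two end bags one at a time. In a `P_k`-witness structure some `r ∈ W(p₁)` is adjacent
to `W(p₂)`. A vertex `u` of `G[W(p₁)]` farthest from `r` is not a cut vertex, so moving
`W(p₁) \ {u}` into `W(p₂)` gives a witness structure with `W(p₁) = {u}`; as `p₁` is a leaf, no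
new adjacency to other bags appears. For `k ≥ 3` this leaves `W(p_k)` untouched, and the same
step at the other end produces a suitable pair.
-/

namespace SimpleGraph

variable {V : Type*} {G : SimpleGraph V}

/-- A vertex farthest from `r` lies on no shortest walk from `r` to another vertex. -/
lemma Connected.exists_ne_forall_walk_notMem_support [Finite V] [Nontrivial V]
    (hG : G.Connected) (r : V) :
    ∃ u, u ≠ r ∧ ∀ v, v ≠ u → ∃ p : G.Walk r v, u ∉ p.support := by
  classical
  obtain ⟨u, hu⟩ := Finite.exists_max (G.dist r)
  obtain ⟨w, hw⟩ := exists_ne r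
  refine ⟨u, fun hur => ?_, fun v hvu => ?_⟩
  · have := hG.pos_dist_of_ne hw.symm
    have := hu w
    rw [hur, dist_self] at this
    omega
  obtain ⟨p, hp⟩ := hG.exists_walk_length_eq_dist r v
  refine ⟨p, fun hup => ?_⟩
  have := p.length_takeUntil_lt_length hup hvu.symm
  have := G.dist_le (p.takeUntil u hup)
  have := hu v
  omega

lemma exists_connected_induce_diff_singleton {S : Set V} (hSf : S.Finite)
    (hS : (G.induce S).Connected) {r s : V} (hr : r ∈ S) (hs : s ∈ S) (hsr : s ≠ r) :
    ∃ u ∈ S, u ≠ r ∧ (G.induce (S \ {u})).Connected := by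
  have : Finite S := hSf.to_subtype
  have : Nontrivial S := ⟨⟨s, hs⟩, ⟨r, hr⟩, by simpa using hsr⟩
  obtain ⟨⟨u, huS⟩, hur, hu⟩ := hS.exists_ne_forall_walk_notMem_support ⟨r, hr⟩
  have hur : u ≠ r := by simpa using hur
  refine ⟨u, huS, hur, G.induce_connected_of_patches r ⟨hr, hur.symm⟩ fun {v} hv => ?_⟩
  obtain ⟨p, hp⟩ := hu ⟨v, hv.1⟩ (by simpa using hv.2)
  let q : G.Walk r v := p.map (Embedding.induce S).toHom
  refine ⟨{x | x ∈ q.support}, ?_, q.start_mem_support, q.end_mem_support,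
    q.connected_induce_support.preconnected _ _⟩
  intro x (hx : x ∈ (p.map (Embedding.induce S).toHom).support)
  rw [Walk.support_map, List.mem_map] at hx
  obtain ⟨y, hy, rfl⟩ := hx
  exact ⟨y.2, fun hyu => hp (by rwa [show y = ⟨u, huS⟩ from Subtype.ext hyu] at hy)⟩

lemma exists_adj_of_preconnected_induce {S : Set V} (hS : (G.induce S).Preconnected) {u v : V}
    (hu : u ∈ S) (hv : v ∈ S) (huv : u ≠ v) : ∃ w ∈ S, G.Adj u w := by
  have : Nontrivial S := ⟨⟨u, hu⟩, ⟨v, hv⟩, by simpa using huv⟩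
  obtain ⟨w, hw⟩ := hS.exists_adj_of_nontrivial ⟨u, hu⟩
  exact ⟨w, w.2, hw⟩

lemma induce_singleton_connected (u : V) : (G.induce {u}).Connected :=
  have : Unique ({u} : Set V) := Set.uniqueSingleton u
  Connected.of_subsingleton

end SimpleGraph

namespace IsWitnessStructure

variable {V W : Type} {G : SimpleGraph V} {H : SimpleGraph W}

lemma exists_eq_preimage {f : W → Set V} (hf : IsWitnessStructure G H f) :
    ∃ π : V → W, f = fun z => π ⁻¹' {z} := by
  choose π hπ using fun v => (hf.2.2.1 v).exists
  refine ⟨π, funext fun z => Set.ext fun v => ⟨fun hv => ?_, ?_⟩⟩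
  · exact ((hf.2.2.1 v).unique hv (hπ v)).symm
  · rintro rfl
    exact hπ v

variable {π : V → W} {x y : W}

lemma adj_of_adj (hf : IsWitnessStructure G H fun z => π ⁻¹' {z}) {a b : V} (hab : G.Adj a b)
    (hne : π a ≠ π b) : H.Adj (π a) (π b) :=
  (hf.2.2.2 _ _ hne).mp ⟨a, rfl, b, rfl, hab⟩

/-- `π'` differs from `π` only by moving vertices from the bag of the leaf `x` to the bag of its
neighbour `y`; this cannot create adjacencies to other bags. -/
theorem of_reassign_leaf {π' : V → W} (hf : IsWitnessStructure G H fun z => π ⁻¹' {z})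
    (hleaf : ∀ z, H.Adj x z ↔ z = y) (hπ' : ∀ v, π' v ≠ π v → π v = x ∧ π' v = y)
    (hne : ∀ z, (π' ⁻¹' {z}).Nonempty) (hconn : ∀ z, (G.induce (π' ⁻¹' {z})).Connected)
    (hxy : ∃ a b, π' a = x ∧ π' b = y ∧ G.Adj a b) :
    IsWitnessStructure G H fun z => π' ⁻¹' {z} := by
  have hyx : H.Adj y x := ((hleaf y).mpr rfl).symm
  have hπ'_of_ne {v} (hv : π v ≠ x) : π' v = π v :=
    by_contra fun h => hv (hπ' v h).1
  refine ⟨hne, hconn, fun v => existsUnique_eq', fun z₁ z₂ hz => ⟨?_, fun h => ?_⟩⟩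
  · rintro ⟨a, rfl, b, rfl, hab⟩
    by_cases hx : π a = x ∨ π b = x
    · have hbag {v w} (hv : π v = x) (hvw : G.Adj v w) : π w = x ∨ π w = y := by
        by_contra! hw
        exact hw.2 ((hleaf _).mp (hv ▸ hf.adj_of_adj hvw (hv ▸ hw.1.symm)))
      have hto {v} (hv : π v = x ∨ π v = y) : π' v = x ∨ π' v = y := by
        by_cases h : π' v = π v
        · rwa [h]
        · exact .inr (hπ' v h).2
      have hab' : (π a = x ∨ π a = y) ∧ (π b = x ∨ π b = y) := by
        rcases hx with hx | hx
        · exact ⟨.inl hx, hbag hx hab⟩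
        · exact ⟨hbag hx hab.symm, .inl hx⟩
      rcases hto hab'.1 with ha | ha <;> rcases hto hab'.2 with hb | hb <;>
        rw [ha, hb] at hz ⊢ <;> first | exact absurd rfl hz | exact hyx | exact hyx.symm
    · push Not at hx
      rw [hπ'_of_ne hx.1, hπ'_of_ne hx.2] at hz ⊢
      exact hf.adj_of_adj hab hz
  · by_cases hx : z₁ = x ∨ z₂ = x
    · obtain ⟨a, b, ha, hb, hab⟩ := hxy
      rcases hx with rfl | rfl
      · exact ⟨a, ha, b, ((hleaf z₂).mp h) ▸ hb, hab⟩
      · exact ⟨b, ((hleaf z₁).mp h.symm) ▸ hb, a, ha, hab.symm⟩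
    · push Not at hx
      obtain ⟨a, ha, b, hb, hab⟩ := (hf.2.2.2 z₁ z₂ hz).mpr h
      exact ⟨a, (hπ'_of_ne (ha.symm ▸ hx.1)).trans ha, b, (hπ'_of_ne (hb.symm ▸ hx.2)).trans hb,
        hab⟩

theorem exists_singleton_bag_of_leaf [Finite V] {f : W → Set V} (hf : IsWitnessStructure G H f)
    (hleaf : ∀ z, H.Adj x z ↔ z = y) :
    ∃ (u : V) (f' : W → Set V), IsWitnessStructure G H f' ∧ f' x = {u} ∧
      ∀ z, z ≠ x → z ≠ y → f' z = f z := by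
  obtain ⟨π, rfl⟩ := hf.exists_eq_preimage
  have hyx : y ≠ x := ((hleaf y).mpr rfl).ne'
  obtain ⟨r, hr, s, hs, hrs⟩ := (hf.2.2.2 x y hyx.symm).mpr ((hleaf y).mpr rfl)
  by_cases hsing : ∃ t ∈ π ⁻¹' {x}, t ≠ r
  swap
  · push Not at hsing
    exact ⟨r, _, hf, Set.eq_singleton_iff_unique_mem.mpr ⟨hr, hsing⟩, fun _ _ _ => rfl⟩
  obtain ⟨t, ht, htr⟩ := hsing
  obtain ⟨u, hu, hur, hconn⟩ :=
    exists_connected_induce_diff_singleton (Set.toFinite _) (hf.2.1 x) hr ht htr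
  obtain ⟨w, hw, huw⟩ := exists_adj_of_preconnected_induce (hf.2.1 x).preconnected hu hr hur
  classical
  let π' v := if v ≠ u ∧ π v = x then y else π v
  have hx' : π' ⁻¹' {x} = {u} := by
    ext v; simp only [π', Set.mem_preimage, Set.mem_singleton_iff] at hu ⊢; grind
  have hy' : π' ⁻¹' {y} = π ⁻¹' {y} ∪ (π ⁻¹' {x} \ {u}) := by
    ext v; simp only [π', Set.mem_preimage, Set.mem_singleton_iff] at hu ⊢; grind
  have hz' {z} (hzx : z ≠ x) (hzy : z ≠ y) : π' ⁻¹' {z} = π ⁻¹' {z} := by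
    ext v; simp only [π', Set.mem_preimage, Set.mem_singleton_iff] at hu ⊢; grind
  refine ⟨u, fun z => π' ⁻¹' {z}, hf.of_reassign_leaf hleaf ?_ ?_ ?_ ?_, hx', fun z => hz'⟩
  · intro v hv
    simp only [π'] at hv ⊢
    grind
  · intro z
    obtain rfl | hzx := eq_or_ne z x
    · exact hx' ▸ Set.singleton_nonempty u
    obtain rfl | hzy := eq_or_ne z y
    · exact hy' ▸ (hf.1 z).mono Set.subset_union_left
    · exact hz' hzx hzy ▸ hf.1 z
  · intro z
    obtain rfl | hzx := eq_or_ne z x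
    · exact hx' ▸ induce_singleton_connected u
    obtain rfl | hzy := eq_or_ne z y
    · exact hy' ▸ connected_induce_union (hf.2.1 z).preconnected hconn.preconnected hs
        ⟨hr, hur.symm⟩ hrs.symm
    · exact hz' hzx hzy ▸ hf.2.1 z
  · refine ⟨u, w, (hx'.symm ▸ rfl : u ∈ π' ⁻¹' {x}), ?_, huw⟩
    exact (hy'.symm ▸ Or.inr ⟨hw, huw.ne'⟩ : w ∈ π' ⁻¹' {y})

end IsWitnessStructure

lemma pathGraph_adj_zero_iff {k : ℕ} (hk : 2 ≤ k) (z : Fin k) :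
    (pathGraph k).Adj ⟨0, by omega⟩ z ↔ z = ⟨1, hk⟩ := by
  simp only [pathGraph_adj, Fin.ext_iff]
  omega

lemma pathGraph_adj_last_iff {k : ℕ} (hk : 2 ≤ k) (z : Fin k) :
    (pathGraph k).Adj ⟨k - 1, by omega⟩ z ↔ z = ⟨k - 2, by omega⟩ := by
  simp only [pathGraph_adj, Fin.ext_iff]
  omega

theorem stmt_4 {V : Type} [Fintype V] (G : SimpleGraph V) (k : ℕ) (hk : 3 ≤ k) :
    ContainsAsContraction G (pathGraph k) ↔ ∃ u v : V, PkSuitable k G u v := by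
  refine ⟨fun ⟨f, hf⟩ => ?_, fun ⟨u, v, f, hf, _⟩ => ⟨f, hf⟩⟩
  obtain ⟨u, f₁, hf₁, hf₁u, -⟩ :=
    hf.exists_singleton_bag_of_leaf (pathGraph_adj_zero_iff (by omega))
  obtain ⟨v, f₂, hf₂, hf₂v, hf₂f₁⟩ :=
    hf₁.exists_singleton_bag_of_leaf (pathGraph_adj_last_iff (by omega))
  refine ⟨u, v, f₂, hf₂, fun i hi => ?_, fun i hi => ?_⟩
  · rw [show i = ⟨0, by omega⟩ from Fin.ext hi,
      hf₂f₁ _ (Fin.ne_of_val_ne (by dsimp only; omega)) (Fin.ne_of_val_ne (by dsimp only; omega)),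
      hf₁u]
  · rwa [show i = ⟨k - 1, by omega⟩ from Fin.ext hi]
end

section
/- Let H be a linear forest and let G be an H-free graph. Then for every edge e of G, the graph G/e obtained from G by contracting e is also H-free. -/
open SimpleGraph

/-- The graph `G/e` obtained by contracting the edge between `x` and `y`: the vertices `x` and
`y` are replaced by a single vertex (represented here by `x`, with `y` deleted) adjacent to
precisely those vertices that were adjacent to `x` or to `y` in `G`. -/
def contractEdge {V : Type} (G : SimpleGraph V) (x y : V) : SimpleGraph {z : V // z ≠ y} :=
  SimpleGraph.fromRel (fun a b =>
    G.Adj a.1 b.1 ∨ ((a : V) = x ∧ G.Adj y b.1) ∨ ((b : V) = x ∧ G.Adj a.1 y))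

/-- A linear forest: a forest (acyclic graph) of maximum degree at most 2, i.e. a disjoint
union of paths. -/
def IsLinearForest {W : Type} (H : SimpleGraph W) : Prop :=
  H.IsAcyclic ∧
    ∀ v a b c : W, H.Adj v a → H.Adj v b → H.Adj v c → (a = b ∨ a = c ∨ b = c)


section Aux

variable {W : Type} {H : SimpleGraph W} {w z q p1 p2 s t : W}

private lemma exists_parent (hr : H.Reachable z w) (hz : z ≠ w) :
    ∃ p, H.Adj z p ∧ H.Reachable p w ∧ H.dist p w + 1 = H.dist z w := by
  obtain ⟨q, hq⟩ := hr.exists_walk_length_eq_dist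
  cases q with
  | nil => exact absurd rfl hz
  | @cons _ c _ h q' =>
    refine ⟨c, h, q'.reachable, ?_⟩
    have h1 : H.dist c w ≤ q'.length := dist_le q'
    have h2 : H.dist z w ≤ H.dist c w + 1 := by
      obtain ⟨r, hr2⟩ := q'.reachable.exists_walk_length_eq_dist
      have := dist_le (Walk.cons h r)
      simpa [Walk.length_cons, hr2] using this
    simp only [Walk.length_cons] at hq
    omega

open Classical in
noncomputable def parentFn (H : SimpleGraph W) (w : W) (z : W) : W :=
  if h : H.Reachable z w ∧ z ≠ w then (exists_parent h.1 h.2).choose else z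

private lemma parent_spec (hr : H.Reachable z w) (hz : z ≠ w) :
    H.Adj z (parentFn H w z) ∧ H.Reachable (parentFn H w z) w ∧
      H.dist (parentFn H w z) w + 1 = H.dist z w := by
  classical
  rw [parentFn, dif_pos (⟨hr, hz⟩ : H.Reachable z w ∧ z ≠ w)]
  exact (exists_parent hr hz).choose_spec

private lemma dist_ne_of_adj (hac : H.IsAcyclic) (hs : H.Reachable s w) (ht : H.Reachable t w)
    (hadj : H.Adj s t) : H.dist s w ≠ H.dist t w := by
  classical
  intro heq
  obtain ⟨q, hqp, hql⟩ := ht.exists_path_of_dist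
  have hsne : s ≠ t := hadj.ne
  have hsnotin : s ∉ q.support := by
    intro hmem
    have h1 : (q.takeUntil s hmem).length ≠ 0 := by
      intro h0
      exact hsne (Walk.eq_of_length_eq_zero h0).symm
    have h2 := congrArg Walk.length (q.take_spec hmem)
    rw [Walk.length_append] at h2
    have h3 : H.dist s w ≤ (q.dropUntil s hmem).length := dist_le _
    omega
  obtain ⟨q', hq'p, hq'l⟩ := hs.exists_path_of_dist
  have hu := hac.path_unique ⟨Walk.cons hadj q, hqp.cons hsnotin⟩ ⟨q', hq'p⟩
  have hlen := congrArg (fun r : H.Path s w => r.1.length) hu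
  simp only [Walk.length_cons] at hlen
  rw [hql, hq'l] at hlen
  omega

private lemma adj_lt_eq (hac : H.IsAcyclic) (h1 : H.Adj z p1) (h2 : H.Adj z p2)
    (hr1 : H.Reachable p1 w) (hr2 : H.Reachable p2 w)
    (hd1 : H.dist p1 w < H.dist z w) (hd2 : H.dist p2 w < H.dist z w) : p1 = p2 := by
  classical
  obtain ⟨q1, hq1p, hq1l⟩ := hr1.exists_path_of_dist
  obtain ⟨q2, hq2p, hq2l⟩ := hr2.exists_path_of_dist
  have hz1 : z ∉ q1.support := by
    intro hmem
    have h3 : H.dist z w ≤ (q1.dropUntil z hmem).length := dist_le _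
    have h4 := Walk.length_dropUntil_le q1 hmem
    omega
  have hz2 : z ∉ q2.support := by
    intro hmem
    have h3 : H.dist z w ≤ (q2.dropUntil z hmem).length := dist_le _
    have h4 := Walk.length_dropUntil_le q2 hmem
    omega
  have hu := hac.path_unique ⟨Walk.cons h1 q1, hq1p.cons hz1⟩ ⟨Walk.cons h2 q2, hq2p.cons hz2⟩
  have hs := congrArg (fun r : H.Path z w => r.1.support) hu
  simp only [Walk.support_cons] at hs
  rw [q1.support_eq_cons, q2.support_eq_cons] at hs
  simp only [List.cons.injEq] at hs
  exact hs.2.1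

private lemma parent_unique (hac : H.IsAcyclic) (hr : H.Reachable z w) (ha : H.Adj z q)
    (hd : H.dist q w < H.dist z w) : q = parentFn H w z := by
  have hz : z ≠ w := by
    rintro rfl
    rw [dist_self] at hd
    omega
  obtain ⟨hadj, hrp, hdp⟩ := parent_spec hr hz
  exact adj_lt_eq hac ha hadj (ha.symm.reachable.trans hr) hrp hd (by omega)

end Aux

section Aux2

variable {W : Type} {H : SimpleGraph W} {w : W}

private lemma iter_spec : ∀ (k : ℕ) (z : W), H.Reachable z w → k < H.dist z w →
    H.Reachable ((parentFn H w)^[k] z) w ∧ ((parentFn H w)^[k] z) ≠ w ∧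
      H.dist ((parentFn H w)^[k] z) w = H.dist z w - k := by
  intro k
  induction k with
  | zero =>
    intro z hr hk
    refine ⟨hr, ?_, by simp⟩
    intro he
    rw [Function.iterate_zero_apply] at he
    subst he
    rw [SimpleGraph.dist_self] at hk
    omega
  | succ n ih =>
    intro z hr hk
    have hz : z ≠ w := by
      rintro rfl
      rw [SimpleGraph.dist_self] at hk
      omega
    obtain ⟨hadj, hrp, hd⟩ := parent_spec hr hz
    rw [Function.iterate_succ_apply]
    obtain ⟨i1, i2, i3⟩ := ih (parentFn H w z) hrp (by omega)
    exact ⟨i1, i2, by omega⟩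

end Aux2

section Aux3

variable {V : Type} (G : SimpleGraph V) (x y : V)

private lemma contract_adj_aux (p q : {z : V // z ≠ y}) :
    (contractEdge G x y).Adj p q ↔ p ≠ q ∧
      (G.Adj p.1 q.1 ∨ (p.1 = x ∧ G.Adj y q.1) ∨ (q.1 = x ∧ G.Adj y p.1)) := by
  rw [contractEdge, SimpleGraph.fromRel_adj]
  have h1 : G.Adj p.1 q.1 ↔ G.Adj q.1 p.1 := G.adj_comm _ _
  have h2 : G.Adj y q.1 ↔ G.Adj q.1 y := G.adj_comm _ _
  have h3 : G.Adj y p.1 ↔ G.Adj p.1 y := G.adj_comm _ _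
  tauto

private lemma contract_adj_nx {p q : {z : V // z ≠ y}} (hp : p.1 ≠ x) (hq : q.1 ≠ x) :
    (contractEdge G x y).Adj p q ↔ G.Adj p.1 q.1 := by
  rw [contract_adj_aux]
  constructor
  · rintro ⟨_, h | ⟨h, _⟩ | ⟨h, _⟩⟩
    exacts [h, absurd h hp, absurd h hq]
  · intro h
    exact ⟨fun he => h.ne (congrArg Subtype.val he), Or.inl h⟩

private lemma contract_adj_x (hx : x ≠ y) {q : {z : V // z ≠ y}} (hq : q.1 ≠ x) :
    (contractEdge G x y).Adj ⟨x, hx⟩ q ↔ (G.Adj x q.1 ∨ G.Adj y q.1) := by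
  rw [contract_adj_aux]
  constructor
  · rintro ⟨_, h | ⟨_, h⟩ | ⟨h, _⟩⟩
    exacts [Or.inl h, Or.inr h, absurd h hq]
  · intro h
    refine ⟨fun he => hq (congrArg Subtype.val he).symm, ?_⟩
    rcases h with h | h
    · exact Or.inl h
    · exact Or.inr (Or.inl ⟨rfl, h⟩)

end Aux3

theorem stmt_7 {W V : Type} [Fintype W] [Fintype V] (H : SimpleGraph W)
    (hH : IsLinearForest H) (G : SimpleGraph V) (hfree : IsEmpty (H ↪g G))
    (x y : V) (hxy : G.Adj x y) :
    IsEmpty (H ↪g contractEdge G x y) := by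
  classical
  obtain ⟨hac, hdeg⟩ := hH
  constructor
  intro φ
  have hxny : x ≠ y := hxy.ne
  by_cases hx : ∃ w0, φ w0 = (⟨x, hxny⟩ : {z : V // z ≠ y})
  case neg =>
    push_neg at hx
    have hnex : ∀ t, (φ t).1 ≠ x := fun t h => hx t (Subtype.ext h)
    refine hfree.false ⟨⟨fun z => (φ z).1, fun a b hab => φ.injective (Subtype.ext hab)⟩,
      @fun s t => ?_⟩
    show G.Adj (φ s).1 (φ t).1 ↔ H.Adj s t
    rw [← φ.map_adj_iff, contract_adj_nx G x y (hnex s) (hnex t)]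
  case pos =>
  obtain ⟨w0, hw0⟩ := hx
  have hfne_y : ∀ t : W, (φ t).1 ≠ y := fun t => (φ t).2
  have hfne_x : ∀ t, t ≠ w0 → (φ t).1 ≠ x := by
    intro t ht h
    exact ht (φ.injective (by rw [hw0]; exact Subtype.ext h))
  have hfinj : ∀ s t : W, (φ s).1 = (φ t).1 → s = t := fun s t h => φ.injective (Subtype.ext h)
  have F1 : ∀ s t, s ≠ w0 → t ≠ w0 → (G.Adj (φ s).1 (φ t).1 ↔ H.Adj s t) := by
    intro s t hs ht
    rw [← φ.map_adj_iff, contract_adj_nx G x y (hfne_x s hs) (hfne_x t ht)]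
  have F2 : ∀ t, t ≠ w0 → ((G.Adj x (φ t).1 ∨ G.Adj y (φ t).1) ↔ H.Adj w0 t) := by
    intro t ht
    rw [← φ.map_adj_iff (v := w0) (w := t), hw0, contract_adj_x G x y hxny (hfne_x t ht)]
  by_cases h1 : ∀ c, H.Adj w0 c → G.Adj x (φ c).1
  · -- contract vertex behaves like x
    refine hfree.false ⟨⟨fun z => if z = w0 then x else (φ z).1, ?_⟩, @fun s t => ?_⟩
    · intro s t hst
      simp only at hst
      by_cases hs : s = w0 <;> by_cases ht : t = w0
      · rw [hs, ht]
      · rw [if_pos hs, if_neg ht] at hst; exact absurd hst.symm (hfne_x t ht)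
      · rw [if_neg hs, if_pos ht] at hst; exact absurd hst (hfne_x s hs)
      · rw [if_neg hs, if_neg ht] at hst; exact hfinj s t hst
    · show G.Adj (if s = w0 then x else (φ s).1) (if t = w0 then x else (φ t).1) ↔ H.Adj s t
      by_cases hs : s = w0 <;> by_cases ht : t = w0
      · subst hs; subst ht; rw [if_pos rfl]
        exact iff_of_false (G.irrefl) (H.irrefl)
      · subst hs; rw [if_pos rfl, if_neg ht]
        exact ⟨fun h => (F2 t ht).mp (Or.inl h), fun h => h1 t h⟩
      · subst ht; rw [if_pos rfl, if_neg hs, G.adj_comm, H.adj_comm]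
        exact ⟨fun h => (F2 s hs).mp (Or.inl h), fun h => h1 s h⟩
      · rw [if_neg hs, if_neg ht]; exact F1 s t hs ht
  by_cases h2 : ∀ c, H.Adj w0 c → G.Adj y (φ c).1
  · -- contract vertex behaves like y
    refine hfree.false ⟨⟨fun z => if z = w0 then y else (φ z).1, ?_⟩, @fun s t => ?_⟩
    · intro s t hst
      simp only at hst
      by_cases hs : s = w0 <;> by_cases ht : t = w0
      · rw [hs, ht]
      · rw [if_pos hs, if_neg ht] at hst; exact absurd hst.symm (hfne_y t)
      · rw [if_neg hs, if_pos ht] at hst; exact absurd hst (hfne_y s)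
      · rw [if_neg hs, if_neg ht] at hst; exact hfinj s t hst
    · show G.Adj (if s = w0 then y else (φ s).1) (if t = w0 then y else (φ t).1) ↔ H.Adj s t
      by_cases hs : s = w0 <;> by_cases ht : t = w0
      · subst hs; subst ht; rw [if_pos rfl]
        exact iff_of_false (G.irrefl) (H.irrefl)
      · subst hs; rw [if_pos rfl, if_neg ht]
        exact ⟨fun h => (F2 t ht).mp (Or.inr h), fun h => h2 t h⟩
      · subst ht; rw [if_pos rfl, if_neg hs, G.adj_comm, H.adj_comm]
        exact ⟨fun h => (F2 s hs).mp (Or.inr h), fun h => h2 s h⟩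
      · rw [if_neg hs, if_neg ht]; exact F1 s t hs ht
  -- mixed case
  push_neg at h1 h2
  obtain ⟨b0, hwb, hbx⟩ := h1
  obtain ⟨a0, hwa, hay⟩ := h2
  have hanw : a0 ≠ w0 := fun h => H.irrefl (by rw [h] at hwa; exact hwa)
  have hbnw : b0 ≠ w0 := fun h => H.irrefl (by rw [h] at hwb; exact hwb)
  have hax : G.Adj x (φ a0).1 := by
    rcases (F2 a0 hanw).mpr hwa with h | h
    · exact h
    · exact absurd h hay
  have hby : G.Adj y (φ b0).1 := by
    rcases (F2 b0 hbnw).mpr hwb with h | h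
    · exact absurd h hbx
    · exact h
  have hab : a0 ≠ b0 := fun h => hbx (by rw [← h]; exact hax)
  have hnbr : ∀ t, H.Adj w0 t → t = a0 ∨ t = b0 := by
    intro t ht
    rcases hdeg w0 a0 b0 t hwa hwb ht with h | h | h
    · exact absurd h hab
    · exact Or.inl h.symm
    · exact Or.inr h.symm
  have hra : H.Reachable a0 w0 := hwa.symm.reachable
  have hrb : H.Reachable b0 w0 := hwb.symm.reachable
  have hda : H.dist a0 w0 = 1 := by rw [SimpleGraph.dist_eq_one_iff_adj]; exact hwa.symm
  have hdb : H.dist b0 w0 = 1 := by rw [SimpleGraph.dist_eq_one_iff_adj]; exact hwb.symm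
  set B : W → Prop := fun z =>
    H.Reachable z w0 ∧ z ≠ w0 ∧ (parentFn H w0)^[H.dist z w0 - 1] z = b0 with hBdef
  have hBb : B b0 := ⟨hrb, hbnw, by simp [hdb]⟩
  have hBa : ¬ B a0 := by
    rintro ⟨_, _, hit⟩
    rw [hda] at hit
    simp only [Nat.sub_self, Function.iterate_zero_apply] at hit
    exact hab hit
  have hdpos : ∀ z, B z → H.dist z w0 ≠ 0 := fun z hz =>
    SimpleGraph.dist_ne_zero_iff_ne_and_reachable.mpr ⟨hz.2.1, hz.1⟩
  have hBd2 : ∀ z, B z → z ≠ b0 → 2 ≤ H.dist z w0 := by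
    rintro z hz hzb
    by_contra h
    have h0 := hdpos z hz
    obtain ⟨_, _, hit⟩ := hz
    have h1 : H.dist z w0 = 1 := by omega
    rw [h1] at hit
    exact hzb hit
  have hBp : ∀ z, B z → z ≠ b0 → B (parentFn H w0 z) ∧
      H.dist (parentFn H w0 z) w0 + 1 = H.dist z w0 ∧ H.Adj z (parentFn H w0 z) := by
    intro z hz hzb
    have h2 := hBd2 z hz hzb
    obtain ⟨hzr, hzw, hit⟩ := hz
    obtain ⟨hadj, hrp, hd⟩ := parent_spec hzr hzw
    have hpw : parentFn H w0 z ≠ w0 := by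
      intro h
      rw [h, SimpleGraph.dist_self] at hd
      omega
    refine ⟨⟨hrp, hpw, ?_⟩, hd, hadj⟩
    have he : H.dist z w0 - 1 = (H.dist (parentFn H w0 z) w0 - 1) + 1 := by omega
    rw [he, Function.iterate_succ_apply] at hit
    exact hit
  have hpb : parentFn H w0 b0 = w0 := by
    obtain ⟨hadj, hrp, hd⟩ := parent_spec hrb hbnw
    rw [hdb] at hd
    exact (hrp.dist_eq_zero_iff).mp (by omega)
  have hstep : ∀ s t, H.Reachable s w0 → s ≠ w0 → H.Adj s t →
      (t = parentFn H w0 s ∧ H.dist t w0 + 1 = H.dist s w0) ∨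
      (s = parentFn H w0 t ∧ H.dist s w0 + 1 = H.dist t w0 ∧ H.Reachable t w0 ∧ t ≠ w0) := by
    intro s t hrs hsw hadj
    have hrt : H.Reachable t w0 := hadj.symm.reachable.trans hrs
    have hne := dist_ne_of_adj hac hrs hrt hadj
    have hb1 : H.dist s w0 ≤ H.dist t w0 + 1 := by
      obtain ⟨r, hr2⟩ := hrt.exists_walk_length_eq_dist
      have := SimpleGraph.dist_le (SimpleGraph.Walk.cons hadj r)
      simpa [SimpleGraph.Walk.length_cons, hr2] using this
    have hb2 : H.dist t w0 ≤ H.dist s w0 + 1 := by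
      obtain ⟨r, hr2⟩ := hrs.exists_walk_length_eq_dist
      have := SimpleGraph.dist_le (SimpleGraph.Walk.cons hadj.symm r)
      simpa [SimpleGraph.Walk.length_cons, hr2] using this
    rcases Nat.lt_or_ge (H.dist t w0) (H.dist s w0) with h | h
    · exact Or.inl ⟨parent_unique hac hrs hadj h, by omega⟩
    · have hlt : H.dist s w0 < H.dist t w0 := by omega
      have htw : t ≠ w0 := by
        intro h'
        rw [h', SimpleGraph.dist_self] at hlt
        omega
      exact Or.inr ⟨parent_unique hac hrt hadj.symm hlt, by omega, hrt, htw⟩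
  have hC1 : ∀ t, B t → t ≠ b0 → ¬ H.Adj w0 t := by
    intro t ht htb hadj
    rcases hnbr t hadj with rfl | rfl
    · exact hBa ht
    · exact htb rfl
  have hBadj : ∀ s t, B s → H.Adj s t → t = w0 ∨ B t := by
    intro s t hs hadj
    have hs' := hs
    obtain ⟨hrs, hsw, hit⟩ := hs
    rcases hstep s t hrs hsw hadj with ⟨hpt, hd⟩ | ⟨hps, hd, hrt, htw⟩
    · by_cases hsb : s = b0
      · subst hsb
        rw [hpb] at hpt
        exact Or.inl hpt
      · right
        rw [hpt]
        exact (hBp s hs' hsb).1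
    · right
      refine ⟨hrt, htw, ?_⟩
      have h0 := hdpos s hs'
      have he : H.dist t w0 - 1 = (H.dist s w0 - 1) + 1 := by omega
      rw [he, Function.iterate_succ_apply, ← hps, hit]
  have hC3 : ∀ s t, B s → ¬ B t → t ≠ w0 → ¬ H.Adj s t := by
    intro s t hs hnt htw hadj
    rcases hBadj s t hs hadj with h | h
    exacts [htw h, hnt h]
  have hC2 : ∀ t, B t → t ≠ b0 → (H.Adj b0 t ↔ parentFn H w0 t = b0) := by
    intro t ht htb
    constructor
    · intro hadj
      rcases hstep b0 t hrb hbnw hadj with ⟨hpt, _⟩ | ⟨hps, _, _, _⟩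
      · rw [hpb] at hpt
        exact absurd hpt ht.2.1
      · exact hps.symm
    · intro h
      have h' := (hBp t ht htb).2.2
      rw [h] at h'
      exact h'.symm
  have hpinj : ∀ s t, B s → s ≠ b0 → B t → t ≠ b0 → parentFn H w0 s = parentFn H w0 t → s = t := by
    intro s t hs hsb ht htb hpe
    obtain ⟨hBs', hds, hadjs⟩ := hBp s hs hsb
    obtain ⟨hBt', hdt, hadjt⟩ := hBp t ht htb
    have hadj2 : H.Adj (parentFn H w0 s) t := by rw [hpe]; exact hadjt.symm
    have hdt' : H.dist (parentFn H w0 s) w0 + 1 = H.dist t w0 := by rw [hpe]; exact hdt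
    by_cases hqb : parentFn H w0 s = b0
    · rcases hdeg (parentFn H w0 s) s t w0 hadjs.symm hadj2 (by rw [hqb]; exact hwb.symm)
        with h | h | h
      · exact h
      · exact absurd h hs.2.1
      · exact absurd h ht.2.1
    · obtain ⟨hBq, hdq, hadjq⟩ := hBp _ hBs' hqb
      rcases hdeg (parentFn H w0 s) s t (parentFn H w0 (parentFn H w0 s)) hadjs.symm hadj2 hadjq
        with h | h | h
      · exact h
      · exfalso
        have hce := congrArg (fun u => H.dist u w0) h
        omega
      · exfalso
        have hce := congrArg (fun u => H.dist u w0) h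
        omega
  have hC4aux : ∀ s t, B s → s ≠ b0 → B t → t ≠ b0 →
      H.Adj (parentFn H w0 s) (parentFn H w0 t) →
      H.dist (parentFn H w0 s) w0 + 1 = H.dist (parentFn H w0 t) w0 → H.Adj s t := by
    intro s t hs hsb ht htb hadj hd
    obtain ⟨hBps, hds, hadjs⟩ := hBp s hs hsb
    obtain ⟨hBpt, hdt, hadjt⟩ := hBp t ht htb
    by_cases hqb : parentFn H w0 s = b0
    · rcases hdeg (parentFn H w0 s) s (parentFn H w0 t) w0 hadjs.symm hadj
        (by rw [hqb]; exact hwb.symm) with h | h | h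
      · rw [h]; exact hadjt.symm
      · exact absurd h hs.2.1
      · exact absurd h hBpt.2.1
    · obtain ⟨hBq, hdq, hadjq⟩ := hBp _ hBps hqb
      rcases hdeg (parentFn H w0 s) s (parentFn H w0 t) (parentFn H w0 (parentFn H w0 s))
        hadjs.symm hadj hadjq with h | h | h
      · rw [h]; exact hadjt.symm
      · exfalso
        have hce := congrArg (fun u => H.dist u w0) h
        omega
      · exfalso
        have hce := congrArg (fun u => H.dist u w0) h
        omega
  have hC4 : ∀ s t, B s → s ≠ b0 → B t → t ≠ b0 →
      (H.Adj (parentFn H w0 s) (parentFn H w0 t) ↔ H.Adj s t) := by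
    intro s t hs hsb ht htb
    obtain ⟨hBps, hds, hadjs⟩ := hBp s hs hsb
    obtain ⟨hBpt, hdt, hadjt⟩ := hBp t ht htb
    constructor
    · intro hadj
      rcases hstep _ _ hBps.1 hBps.2.1 hadj with ⟨hh, hd⟩ | ⟨hh, hd, _, _⟩
      · exact (hC4aux t s ht htb hs hsb hadj.symm (by omega)).symm
      · exact hC4aux s t hs hsb ht htb hadj (by omega)
    · intro hadj
      rcases hstep s t hs.1 hs.2.1 hadj with ⟨hh, _⟩ | ⟨hh, _, _, _⟩
      · rw [← hh]; exact hadjt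
      · rw [← hh]; exact hadjs.symm
  -- the modified embedding
  set ψ : W → V := fun z =>
    if z = w0 then x else if B z then (if z = b0 then y else (φ (parentFn H w0 z)).1)
    else (φ z).1 with hψ
  have hψw : ψ w0 = x := by simp [hψ]
  have hψb : ψ b0 = y := by
    show (if b0 = w0 then x else if B b0 then if b0 = b0 then y
      else (φ (parentFn H w0 b0)).1 else (φ b0).1) = y
    rw [if_neg hbnw, if_pos hBb, if_pos rfl]
  have hψI : ∀ z, B z → z ≠ b0 → ψ z = (φ (parentFn H w0 z)).1 := by
    intro z hz hzb
    show (if z = w0 then x else if B z then if z = b0 then y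
      else (φ (parentFn H w0 z)).1 else (φ z).1) = _
    rw [if_neg hz.2.1, if_pos hz, if_neg hzb]
  have hψO : ∀ z, ¬ B z → z ≠ w0 → ψ z = (φ z).1 := by
    intro z hz hzw
    show (if z = w0 then x else if B z then if z = b0 then y
      else (φ (parentFn H w0 z)).1 else (φ z).1) = _
    rw [if_neg hzw, if_neg hz]
  have main : ∀ s t, G.Adj (ψ s) (ψ t) ↔ H.Adj s t := by
    have hsym : ∀ s t, (G.Adj (ψ s) (ψ t) ↔ H.Adj s t) → (G.Adj (ψ t) (ψ s) ↔ H.Adj t s) := by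
      intro s t h
      rw [G.adj_comm, H.adj_comm]
      exact h
    have cwb : G.Adj (ψ w0) (ψ b0) ↔ H.Adj w0 b0 := by
      rw [hψw, hψb]; exact iff_of_true hxy hwb
    have cwI : ∀ t, B t → t ≠ b0 → (G.Adj (ψ w0) (ψ t) ↔ H.Adj w0 t) := by
      intro t ht htb
      rw [hψw, hψI t ht htb]
      refine iff_of_false ?_ (hC1 t ht htb)
      obtain ⟨hBpt, hdt, hadjt⟩ := hBp t ht htb
      by_cases h : parentFn H w0 t = b0
      · rw [h]; exact hbx
      · intro hadj
        exact hC1 _ hBpt h ((F2 _ hBpt.2.1).mp (Or.inl hadj))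
    have cwO : ∀ t, ¬ B t → t ≠ w0 → (G.Adj (ψ w0) (ψ t) ↔ H.Adj w0 t) := by
      intro t ht htw
      rw [hψw, hψO t ht htw]
      constructor
      · intro h; exact (F2 t htw).mp (Or.inl h)
      · intro h
        rcases hnbr t h with rfl | rfl
        · exact hax
        · exact absurd hBb ht
    have cbI : ∀ t, B t → t ≠ b0 → (G.Adj (ψ b0) (ψ t) ↔ H.Adj b0 t) := by
      intro t ht htb
      rw [hψb, hψI t ht htb, hC2 t ht htb]
      obtain ⟨hBpt, hdt, hadjt⟩ := hBp t ht htb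
      by_cases h : parentFn H w0 t = b0
      · rw [h]; exact iff_of_true hby rfl
      · refine iff_of_false ?_ h
        intro hadj
        exact hC1 _ hBpt h ((F2 _ hBpt.2.1).mp (Or.inr hadj))
    have cbO : ∀ t, ¬ B t → t ≠ w0 → (G.Adj (ψ b0) (ψ t) ↔ H.Adj b0 t) := by
      intro t ht htw
      rw [hψb, hψO t ht htw]
      refine iff_of_false ?_ (hC3 b0 t hBb ht htw)
      intro hadj
      by_cases hta : t = a0
      · rw [hta] at hadj; exact hay hadj
      · have hwt : ¬ H.Adj w0 t := by
          intro h
          rcases hnbr t h with rfl | rfl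
          · exact hta rfl
          · exact ht hBb
        exact hwt ((F2 t htw).mp (Or.inr hadj))
    have cII : ∀ s t, B s → s ≠ b0 → B t → t ≠ b0 → (G.Adj (ψ s) (ψ t) ↔ H.Adj s t) := by
      intro s t hs hsb ht htb
      rw [hψI s hs hsb, hψI t ht htb, F1 _ _ (hBp s hs hsb).1.2.1 (hBp t ht htb).1.2.1]
      exact hC4 s t hs hsb ht htb
    have cIO : ∀ s t, B s → s ≠ b0 → ¬ B t → t ≠ w0 → (G.Adj (ψ s) (ψ t) ↔ H.Adj s t) := by
      intro s t hs hsb ht htw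
      rw [hψI s hs hsb, hψO t ht htw]
      refine iff_of_false ?_ (hC3 s t hs ht htw)
      intro hadj
      have hadj' := (F1 _ _ (hBp s hs hsb).1.2.1 htw).mp hadj
      by_cases h : parentFn H w0 s = b0
      · rw [h] at hadj'; exact hC3 b0 t hBb ht htw hadj'
      · exact hC3 _ t (hBp s hs hsb).1 ht htw hadj'
    intro s t
    by_cases hs : s = w0
    · rw [hs]
      by_cases ht : t = w0
      · rw [ht, hψw]
        exact iff_of_false (G.irrefl) (H.irrefl)
      · by_cases hBt : B t
        · by_cases htb : t = b0
          · rw [htb]; exact cwb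
          · exact cwI t hBt htb
        · exact cwO t hBt ht
    by_cases ht : t = w0
    · rw [ht]
      apply hsym
      by_cases hBs : B s
      · by_cases hsb : s = b0
        · rw [hsb]; exact cwb
        · exact cwI s hBs hsb
      · exact cwO s hBs hs
    by_cases hBs : B s
    · by_cases hsb : s = b0
      · rw [hsb]
        by_cases hBt : B t
        · by_cases htb : t = b0
          · rw [htb, hψb]
            exact iff_of_false (G.irrefl) (H.irrefl)
          · exact cbI t hBt htb
        · exact cbO t hBt ht
      · by_cases hBt : B t
        · by_cases htb : t = b0
          · rw [htb]
            apply hsym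
            exact cbI s hBs hsb
          · exact cII s t hBs hsb hBt htb
        · exact cIO s t hBs hsb hBt ht
    · by_cases hBt : B t
      · by_cases htb : t = b0
        · rw [htb]
          apply hsym
          exact cbO s hBs hs
        · apply hsym
          exact cIO t s hBt htb hBs hs
      · rw [hψO s hBs hs, hψO t hBt ht]
        exact F1 s t hs ht
  have hinj : Function.Injective ψ := by
    have hval_x : ∀ z, z ≠ w0 → ψ z ≠ x := by
      intro z hz
      by_cases hB : B z
      · by_cases hzb : z = b0
        · subst hzb
          rw [hψb]
          exact fun h => hxny h.symm
        · rw [hψI z hB hzb]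
          exact hfne_x _ (hBp z hB hzb).1.2.1
      · rw [hψO z hB hz]
        exact hfne_x z hz
    have hval_y : ∀ z, z ≠ w0 → z ≠ b0 → ψ z ≠ y := by
      intro z hz hzb
      by_cases hB : B z
      · rw [hψI z hB hzb]; exact hfne_y _
      · rw [hψO z hB hz]; exact hfne_y _
    intro s t h
    by_cases hs : s = w0
    · rw [hs] at h ⊢
      by_cases ht : t = w0
      · exact ht.symm
      · rw [hψw] at h
        exact absurd h.symm (hval_x t ht)
    by_cases ht : t = w0
    · rw [ht] at h ⊢
      rw [hψw] at h
      exact absurd h (hval_x s hs)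
    by_cases hsb : s = b0
    · rw [hsb] at h ⊢
      by_cases htb : t = b0
      · exact htb.symm
      · rw [hψb] at h
        exact absurd h.symm (hval_y t ht htb)
    by_cases htb : t = b0
    · rw [htb] at h ⊢
      rw [hψb] at h
      exact absurd h (hval_y s hs hsb)
    by_cases hBs : B s <;> by_cases hBt : B t
    · rw [hψI s hBs hsb, hψI t hBt htb] at h
      exact hpinj s t hBs hsb hBt htb (hfinj _ _ h)
    · rw [hψI s hBs hsb, hψO t hBt ht] at h
      have he := hfinj _ _ h
      exact absurd (he ▸ (hBp s hBs hsb).1) hBt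
    · rw [hψO s hBs hs, hψI t hBt htb] at h
      have he := hfinj _ _ h
      have hBp' := (hBp t hBt htb).1
      rw [← he] at hBp'
      exact absurd hBp' hBs
    · rw [hψO s hBs hs, hψO t hBt ht] at h
      exact hfinj s t h
  exact hfree.false ⟨⟨ψ, hinj⟩, @fun s t => main s t⟩
end

section
/- Let k ≥ 4 and let G be a (P_1+P_5)-free graph with a P_k-suitable pair (u,v) such that the neighbourhood N(u) is an independent set. Then G has a P_k-witness structure W with W(p_1) = {u} and W(p_k) = {v} for which W(p_2) ∖ N(u) contains a set S of size at most 2 such that N(u) ∪ S induces a connected subgraph of G. -/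
open SimpleGraph

lemma noP5 {V : Type} (G : SimpleGraph V)
    (hfree : IsEmpty ((pathGraph 1 ⊕g pathGraph 5) ↪g G))
    (z a b c d e : V)
    (hab : G.Adj a b) (hbc : G.Adj b c) (hcd : G.Adj c d) (hde : G.Adj d e)
    (hac : ¬G.Adj a c) (had : ¬G.Adj a d) (hae : ¬G.Adj a e)
    (hbd : ¬G.Adj b d) (hbe : ¬G.Adj b e) (hce : ¬G.Adj c e)
    (hz : ∀ x, x = a ∨ x = b ∨ x = c ∨ x = d ∨ x = e → z ≠ x ∧ ¬G.Adj z x) :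
    False := by
  have nab : a ≠ b := hab.ne
  have nbc : b ≠ c := hbc.ne
  have ncd : c ≠ d := hcd.ne
  have nde : d ≠ e := hde.ne
  have nac : a ≠ c := by rintro rfl; exact had hcd
  have nad : a ≠ d := by rintro rfl; exact hae hde
  have nae : a ≠ e := by rintro rfl; exact had hde.symm
  have nbd : b ≠ d := by rintro rfl; exact hbe hde
  have nbe : b ≠ e := by rintro rfl; exact hbd hde.symm
  have nce : c ≠ e := by rintro rfl; exact hbe hbc
  have hza := hz a (by tauto); have hzb := hz b (by tauto); have hzc := hz c (by tauto)
  have hzd := hz d (by tauto); have hze := hz e (by tauto)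
  let F : (Fin 1 ⊕ Fin 5) → V := Sum.elim (fun _ => z) (![a, b, c, d, e])
  have hFinj : Function.Injective F := by
    rintro (x | x) (y | y) h
    · congr; omega
    · exfalso
      fin_cases y <;> simp only [F, Sum.elim_inl, Sum.elim_inr] at h <;> simp at h <;>
        first
          | exact hza.1 h | exact hzb.1 h | exact hzc.1 h | exact hzd.1 h | exact hze.1 h
    · exfalso
      fin_cases x <;> simp only [F, Sum.elim_inl, Sum.elim_inr] at h <;> simp at h <;>
        first
          | exact hza.1 h.symm | exact hzb.1 h.symm | exact hzc.1 h.symm | exact hzd.1 h.symm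
          | exact hze.1 h.symm
    · congr
      fin_cases x <;> fin_cases y <;>
        first
          | rfl
          | (simp only [F, Sum.elim_inr] at h
             simp at h
             exfalso
             first
               | exact nab h | exact nac h | exact nad h | exact nae h
               | exact nbc h | exact nbd h | exact nbe h | exact ncd h | exact nce h | exact nde h
               | exact nab h.symm | exact nac h.symm | exact nad h.symm | exact nae h.symm
               | exact nbc h.symm | exact nbd h.symm | exact nbe h.symm | exact ncd h.symm
               | exact nce h.symm | exact nde h.symm)
  have hrel : ∀ x y, G.Adj (F x) (F y) ↔ (pathGraph 1 ⊕g pathGraph 5).Adj x y := by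
    rintro (x | x) (y | y)
    · exact iff_of_false G.irrefl (by simp; exact fun h => h.ne (Subsingleton.elim x y))
    · constructor
      · intro h; exfalso
        fin_cases y <;> simp only [F, Sum.elim_inl, Sum.elim_inr] at h <;> simp at h <;>
          first
            | exact hza.2 h | exact hzb.2 h | exact hzc.2 h | exact hzd.2 h | exact hze.2 h
      · intro h; exact absurd h (by simp)
    · constructor
      · intro h; exfalso
        fin_cases x <;> simp only [F, Sum.elim_inl, Sum.elim_inr] at h <;> simp at h <;>
          first
            | exact hza.2 h.symm | exact hzb.2 h.symm | exact hzc.2 h.symm | exact hzd.2 h.symm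
            | exact hze.2 h.symm
      · intro h; exact absurd h (by simp)
    · fin_cases x <;> fin_cases y <;>
        simp only [F, Sum.elim_inr, SimpleGraph.sum_adj] <;>
        first
          | exact iff_of_true hab (by simp [pathGraph_adj] <;> decide)
          | exact iff_of_true hab.symm (by simp [pathGraph_adj] <;> decide)
          | exact iff_of_true hbc (by simp [pathGraph_adj] <;> decide)
          | exact iff_of_true hbc.symm (by simp [pathGraph_adj] <;> decide)
          | exact iff_of_true hcd (by simp [pathGraph_adj] <;> decide)
          | exact iff_of_true hcd.symm (by simp [pathGraph_adj] <;> decide)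
          | exact iff_of_true hde (by simp [pathGraph_adj] <;> decide)
          | exact iff_of_true hde.symm (by simp [pathGraph_adj] <;> decide)
          | exact iff_of_false G.irrefl (by simp [pathGraph_adj] <;> decide)
          | exact iff_of_false hac (by simp [pathGraph_adj] <;> decide)
          | exact iff_of_false (fun h => hac h.symm) (by simp [pathGraph_adj] <;> decide)
          | exact iff_of_false had (by simp [pathGraph_adj] <;> decide)
          | exact iff_of_false (fun h => had h.symm) (by simp [pathGraph_adj] <;> decide)
          | exact iff_of_false hae (by simp [pathGraph_adj] <;> decide)
          | exact iff_of_false (fun h => hae h.symm) (by simp [pathGraph_adj] <;> decide)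
          | exact iff_of_false hbd (by simp [pathGraph_adj] <;> decide)
          | exact iff_of_false (fun h => hbd h.symm) (by simp [pathGraph_adj] <;> decide)
          | exact iff_of_false hbe (by simp [pathGraph_adj] <;> decide)
          | exact iff_of_false (fun h => hbe h.symm) (by simp [pathGraph_adj] <;> decide)
          | exact iff_of_false hce (by simp [pathGraph_adj] <;> decide)
          | exact iff_of_false (fun h => hce h.symm) (by simp [pathGraph_adj] <;> decide)
  exact hfree.false ⟨⟨F, hFinj⟩, fun {x y} => hrel x y⟩

set_option maxHeartbeats 4000000 in
theorem stmt_9 {V : Type} [Fintype V] (G : SimpleGraph V) (k : ℕ) (hk : 4 ≤ k)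
    (hfree : IsEmpty ((pathGraph 1 ⊕g pathGraph 5) ↪g G))
    (u v : V) (hsuit : PkSuitable k G u v)
    (hind : ∀ a ∈ G.neighborSet u, ∀ b ∈ G.neighborSet u, ¬ G.Adj a b) :
    ∃ f : Fin k → Set V, IsWitnessStructure G (pathGraph k) f ∧
      (∀ i : Fin k, (i : ℕ) = 0 → f i = {u}) ∧
      (∀ i : Fin k, (i : ℕ) = k - 1 → f i = {v}) ∧
      ∃ S : Set V, S ⊆ f ⟨1, by omega⟩ \ G.neighborSet u ∧ S.ncard ≤ 2 ∧
        (G.induce (G.neighborSet u ∪ S)).Connected := by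
  classical
  obtain ⟨f, hW, h0, hl⟩ := hsuit
  refine ⟨f, hW, h0, hl, ?_⟩
  obtain ⟨hne, hconn, huniq, hadj⟩ := hW
  set A : Set V := G.neighborSet u with hA
  have hfu : f ⟨0, by omega⟩ = {u} := h0 ⟨0, by omega⟩ rfl
  set D : Set V := f ⟨1, by omega⟩ with hD
  have hu0 : u ∈ f ⟨0, by omega⟩ := by rw [hfu]; rfl
  have v0 : ((⟨0, by omega⟩ : Fin k) : ℕ) = 0 := rfl
  have v1 : ((⟨1, by omega⟩ : Fin k) : ℕ) = 1 := rfl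
  have v3 : ((⟨3, by omega⟩ : Fin k) : ℕ) = 3 := rfl
  have hne01 : (⟨0, by omega⟩ : Fin k) ≠ ⟨1, by omega⟩ := by
    intro h; have := congrArg Fin.val h; rw [v0, v1] at this; omega
  have hne30 : (⟨3, by omega⟩ : Fin k) ≠ ⟨0, by omega⟩ := by
    intro h; have := congrArg Fin.val h; rw [v3, v0] at this; omega
  have hne31 : (⟨3, by omega⟩ : Fin k) ≠ ⟨1, by omega⟩ := by
    intro h; have := congrArg Fin.val h; rw [v3, v1] at this; omega
  -- A ⊆ D
  have hAD : A ⊆ D := by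
    intro a ha
    have hadjua : G.Adj u a := ha
    obtain ⟨i, hai, -⟩ := huniq a
    by_cases h : i = ⟨0, by omega⟩
    · subst h; rw [hfu] at hai
      exact absurd (hai ▸ hadjua) G.irrefl
    · have hedge : ∃ x ∈ f ⟨0, by omega⟩, ∃ b ∈ f i, G.Adj x b :=
        ⟨u, hu0, a, hai, hadjua⟩
      have hpa : (pathGraph k).Adj ⟨0, by omega⟩ i := (hadj _ i (Ne.symm h)).mp hedge
      rw [pathGraph_adj, v0] at hpa
      have hival : (i : ℕ) = 1 := by omega
      have : i = ⟨1, by omega⟩ := Fin.ext (by rw [hival, v1])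
      rwa [this] at hai
  -- u is not in D
  have huD : u ∉ D := by
    intro h
    obtain ⟨i, -, hun⟩ := huniq u
    exact hne01 ((hun _ hu0).trans (hun _ h).symm)
  -- the far vertex z
  obtain ⟨z, hz3⟩ := hne ⟨3, by omega⟩
  have hzfar : ∀ x, x = u ∨ x ∈ D → z ≠ x ∧ ¬ G.Adj z x := by
    intro x hx
    rcases hx with rfl | hxD
    · constructor
      · intro h
        obtain ⟨i, -, hun⟩ := huniq x
        exact hne30 ((hun _ (h ▸ hz3)).trans (hun _ hu0).symm)
      · intro h
        have hedge : ∃ a ∈ f ⟨3, by omega⟩, ∃ b ∈ f ⟨0, by omega⟩, G.Adj a b :=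
          ⟨z, hz3, x, hu0, h⟩
        have hpa := (hadj _ _ hne30).mp hedge
        rw [pathGraph_adj, v3, v0] at hpa
        omega
    · constructor
      · intro h
        obtain ⟨i, -, hun⟩ := huniq x
        exact hne31 ((hun _ (h ▸ hz3)).trans (hun _ hxD).symm)
      · intro h
        have hedge : ∃ a ∈ f ⟨3, by omega⟩, ∃ b ∈ f ⟨1, by omega⟩, G.Adj a b :=
          ⟨z, hz3, x, hxD, h⟩
        have hpa := (hadj _ _ hne31).mp hedge
        rw [pathGraph_adj, v3, v1] at hpa
        omega
  -- A is nonempty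
  have hAne : A.Nonempty := by
    have hpa : (pathGraph k).Adj ⟨0, by omega⟩ ⟨1, by omega⟩ := by
      rw [pathGraph_adj, v0, v1]; omega
    obtain ⟨a, ha0, b, hb1, hab⟩ := (hadj _ _ hne01).mpr hpa
    rw [hfu] at ha0
    exact ⟨b, by rwa [ha0] at hab⟩
  -- specialized P5-freeness
  have noP5' : ∀ a b c d e : V,
      (a = u ∨ a ∈ D) → (b = u ∨ b ∈ D) → (c = u ∨ c ∈ D) → (d = u ∨ d ∈ D) →
      (e = u ∨ e ∈ D) →
      G.Adj a b → G.Adj b c → G.Adj c d → G.Adj d e →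
      ¬G.Adj a c → ¬G.Adj a d → ¬G.Adj a e → ¬G.Adj b d → ¬G.Adj b e → ¬G.Adj c e →
      False := by
    intro a b c d e ha hb hc hd he hab hbc hcd hde hac had hae hbd hbe hce
    refine noP5 G hfree z a b c d e hab hbc hcd hde hac had hae hbd hbe hce ?_
    intro x hx
    rcases hx with rfl | rfl | rfl | rfl | rfl
    exacts [hzfar _ ha, hzfar _ hb, hzfar _ hc, hzfar _ hd, hzfar _ he]
  -- independence restated
  have hindep : ∀ a ∈ A, ∀ b ∈ A, ¬ G.Adj a b := hind
  -- first step of a walk in D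
  have hstep : ∀ a ∈ D, ∀ b ∈ D, a ≠ b → ∃ x, x ∈ D ∧ G.Adj a x := by
    intro a ha b hb hab
    obtain ⟨p⟩ := (hconn ⟨1, by omega⟩).preconnected ⟨a, ha⟩ ⟨b, hb⟩
    have hnil : ¬ p.Nil := SimpleGraph.Walk.not_nil_of_ne (by
      intro h; exact hab (congrArg Subtype.val h))
    have hadj1 := SimpleGraph.Walk.adj_snd hnil
    exact ⟨(p.getVert 1 : D), (p.getVert 1).2, by simpa using hadj1⟩
  -- main case analysis
  by_cases hsing : ∀ x ∈ A, ∀ y ∈ A, x = y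
  · -- A is a singleton: take S = ∅
    refine ⟨∅, by simp, by simp, ?_⟩
    rw [SimpleGraph.connected_iff_exists_forall_reachable]
    obtain ⟨a0, ha0⟩ := hAne
    have ha0' : a0 ∈ A ∪ (∅ : Set V) := Or.inl ha0
    refine ⟨⟨a0, ha0'⟩, ?_⟩
    rintro ⟨x, hx⟩
    have hx' : x ∈ A := by simpa using hx
    have : x = a0 := hsing x hx' a0 ha0
    subst this
    rfl
  · push_neg at hsing
    obtain ⟨a1, ha1, a2, ha2, ha12⟩ := hsing
    -- the pool of candidate connector vertices
    set P : Finset V := Finset.univ.filter (fun w => w ∈ D ∧ w ∉ A ∧ ∃ a ∈ A, G.Adj w a)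
      with hP
    have hPmem : ∀ w, w ∈ P ↔ (w ∈ D ∧ w ∉ A ∧ ∃ a ∈ A, G.Adj w a) := by
      intro w; simp [hP]
    have hPne : P.Nonempty := by
      obtain ⟨x, hxD, hx⟩ := hstep a1 (hAD ha1) a2 (hAD ha2) ha12
      have hxA : x ∉ A := fun h => hindep a1 ha1 x h hx
      exact ⟨x, (hPmem x).mpr ⟨hxD, hxA, a1, ha1, hx.symm⟩⟩
    obtain ⟨w1, hw1P, hw1max⟩ :=
      P.exists_max_image (fun w => (A ∩ G.neighborSet w).ncard) hPne
    obtain ⟨hw1D, hw1A, a0, ha0, hw1a0⟩ := (hPmem w1).mp hw1P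
    have hw1u : ¬ G.Adj u w1 := fun h => hw1A h
    by_cases hBempty : ∀ a ∈ A, G.Adj w1 a
    · -- S = {w1}
      refine ⟨{w1}, ?_, ?_, ?_⟩
      · intro x hx
        have : x = w1 := hx
        subst this
        exact ⟨hw1D, hw1A⟩
      · simp
      · rw [SimpleGraph.connected_iff_exists_forall_reachable]
        have hw1mem : w1 ∈ A ∪ {w1} := Or.inr rfl
        refine ⟨⟨w1, hw1mem⟩, ?_⟩
        rintro ⟨x, hx⟩
        rcases hx with hxA | hxw
        · exact SimpleGraph.Adj.reachable
            (by simpa using hBempty x hxA :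
              (G.induce (A ∪ {w1})).Adj ⟨w1, hw1mem⟩ ⟨x, Or.inl hxA⟩)
        · have : x = w1 := hxw
          subst this; rfl
    · push_neg at hBempty
      obtain ⟨b0, hb0A, hb0w1⟩ := hBempty
      have hub0 : G.Adj u b0 := hb0A
      have hb0a0 : b0 ≠ a0 := by
        intro h; exact hb0w1 (h ▸ hw1a0)
      obtain ⟨x, hxD, hb0x⟩ := hstep b0 (hAD hb0A) a0 (hAD ha0) hb0a0
      have hxA : x ∉ A := fun h => hindep b0 hb0A x h hb0x
      have hux : ¬ G.Adj u x := fun h => hxA h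
      by_cases hxw1 : G.Adj x w1
      · -- S = {w1, x}; every b ∈ A not adjacent to w1 is adjacent to x
        have hcover : ∀ b ∈ A, ¬ G.Adj w1 b → G.Adj x b := by
          intro b hbA hbw1
          by_contra hxb
          have hub : G.Adj u b := hbA
          -- P5: b - u - b0 - x - w1
          exact noP5' b u b0 x w1
            (Or.inr (hAD hbA)) (Or.inl rfl) (Or.inr (hAD hb0A)) (Or.inr hxD) (Or.inr hw1D)
            hub.symm hub0 hb0x hxw1
            (hindep b hbA b0 hb0A)
            (fun h => hxb h.symm)
            (fun h => hbw1 h.symm)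
            hux
            hw1u
            (fun h => hb0w1 h.symm)
        refine ⟨{w1, x}, ?_, ?_, ?_⟩
        · intro y hy
          rcases hy with rfl | hy'
          · exact ⟨hw1D, hw1A⟩
          · have : y = x := hy'
            subst this
            exact ⟨hxD, hxA⟩
        · exact le_trans (Set.ncard_insert_le _ _) (by simp)
        · rw [SimpleGraph.connected_iff_exists_forall_reachable]
          have hw1mem : w1 ∈ A ∪ {w1, x} := Or.inr (Or.inl rfl)
          have hxmem : x ∈ A ∪ {w1, x} := Or.inr (Or.inr rfl)
          have hwx : (G.induce (A ∪ {w1, x})).Adj ⟨w1, hw1mem⟩ ⟨x, hxmem⟩ := by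
            simpa using hxw1.symm
          refine ⟨⟨w1, hw1mem⟩, ?_⟩
          rintro ⟨y, hy⟩
          rcases hy with hyA | hy'
          · by_cases hyw1 : G.Adj w1 y
            · exact SimpleGraph.Adj.reachable
                (by simpa using hyw1 :
                  (G.induce (A ∪ {w1, x})).Adj ⟨w1, hw1mem⟩ ⟨y, Or.inl hyA⟩)
            · have hxy : G.Adj x y := hcover y hyA hyw1
              exact SimpleGraph.Reachable.trans hwx.reachable
                (SimpleGraph.Adj.reachable
                  (by simpa using hxy :
                    (G.induce (A ∪ {w1, x})).Adj ⟨x, hxmem⟩ ⟨y, Or.inl hyA⟩))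
          · rcases hy' with rfl | hy''
            · rfl
            · have : y = x := hy''
              subst this
              exact hwx.reachable
      · -- contradiction with maximality of w1
        exfalso
        have hsub : ∀ a ∈ A, G.Adj w1 a → G.Adj x a := by
          intro a haA hw1a
          by_contra hxa
          have hua : G.Adj u a := haA
          -- P5: x - b0 - u - a - w1
          exact noP5' x b0 u a w1
            (Or.inr hxD) (Or.inr (hAD hb0A)) (Or.inl rfl) (Or.inr (hAD haA)) (Or.inr hw1D)
            hb0x.symm hub0.symm hua hw1a.symm
            (fun h => hux h.symm)
            hxa hxw1
            (hindep b0 hb0A a haA)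
            (fun h => hb0w1 h.symm)
            hw1u
        have hxP : x ∈ P := (hPmem x).mpr ⟨hxD, hxA, b0, hb0A, hb0x.symm⟩
        have hle := hw1max x hxP
        have hss : (A ∩ G.neighborSet w1) ⊂ (A ∩ G.neighborSet x) := by
          constructor
          · rintro a ⟨haA, haw1⟩
            exact ⟨haA, (G.mem_neighborSet x a).mpr (hsub a haA ((G.mem_neighborSet w1 a).mp haw1))⟩
          · intro hcon
            have hmem : b0 ∈ A ∩ G.neighborSet w1 := hcon ⟨hb0A, (G.mem_neighborSet x b0).mpr hb0x.symm⟩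
            exact hb0w1 ((G.mem_neighborSet w1 b0).mp hmem.2)
        have := Set.ncard_lt_ncard hss (Set.toFinite _)
        omega
end

section
/- Let k ≥ 4 and let ({u}, N(u) ∪ S_u, W(p_3), …, W(p_{k−1}), {v}) be a solution for an instance (G,u,v) of P_k-Suitability. If S′_u ⊆ S_u is such that N(u) ∪ S′_u induces a connected subgraph of G, then ({u}, N(u) ∪ cl(S′_u), W(p_3) ∪ (S_u ∖ cl(S′_u)), W(p_4), …, W(p_{k−1}), {v}) is also a solution for (G,u,v), where cl(S′_u) denotes the closure of S′_u. -/
open SimpleGraph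

/-- The set `T = V(G) ∖ (N[u] ∪ N[v])` of vertices outside the closed neighbourhoods
of `u` and `v`. -/
def Tset {V : Type} (G : SimpleGraph V) (u v : V) : Set V :=
  (insert u (G.neighborSet u) ∪ insert v (G.neighborSet v))ᶜ

/-- A solution for the instance `(G, u, v)` of `P_k`-Suitability, with the witness bags `f`
and distinguished sets `Su`, `Sv`: a `P_k`-witness structure of `G` with
`W(p_1) = {u}`, `W(p_2) = N(u) ∪ Su`, `W(p_{k-1}) = N(v) ∪ Sv` and `W(p_k) = {v}`,
where `Su` and `Sv` are disjoint subsets of `T = V(G) ∖ (N[u] ∪ N[v])`. -/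
def IsSolutionWith {V : Type} (k : ℕ) (G : SimpleGraph V) (u v : V)
    (f : Fin k → Set V) (Su Sv : Set V) : Prop :=
  IsWitnessStructure G (pathGraph k) f ∧
  Su ⊆ Tset G u v ∧ Sv ⊆ Tset G u v ∧ Disjoint Su Sv ∧
  (∀ i : Fin k, (i : ℕ) = 0 → f i = {u}) ∧
  (∀ i : Fin k, (i : ℕ) = 1 → f i = G.neighborSet u ∪ Su) ∧
  (∀ i : Fin k, (i : ℕ) = k - 2 → f i = G.neighborSet v ∪ Sv) ∧
  (∀ i : Fin k, (i : ℕ) = k - 1 → f i = {v})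

/-- The closure of `S'u ⊆ Su`: `S'u` together with all vertices `s ∈ Su` such that every
path in `G` from `s` to `v` contains a vertex of `N(u) ∪ S'u`. -/
def closureOf {V : Type} (G : SimpleGraph V) (u v : V) (Su S'u : Set V) : Set V :=
  S'u ∪ {s ∈ Su | ∀ (w : G.Walk s v), w.IsPath →
    ∃ a ∈ w.support, a ∈ G.neighborSet u ∪ S'u}

/-!
Moving the vertices of `Su \ cl(S'u)` from the second bag to the third preserves the witness
structure as soon as both new bags are connected, since these vertices only have neighbours in
those two bags. Let `X = N(u) ∪ S'u`. A vertex of `cl(S'u) \ S'u` cannot reach `v` avoiding `X`;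
along any walk to `v`, the first vertex outside this set of vertices lies in `X` (a neighbour in
`Su \ X` or in the third bag would reach `v` avoiding `X`), which links it to the connected set
`X` inside the new second bag. Dually, a vertex of `Su \ cl(S'u)` reaches `v` avoiding `X`, and
along such a walk the first vertex outside `Su` lies in the third bag.
-/

section Walks

variable {V : Type*} {G : SimpleGraph V}

theorem SimpleGraph.Walk.exists_first_exit {A : Set V} :
    ∀ {a b : V} (w : G.Walk a b), a ∈ A → b ∉ A →
      ∃ x y, ∃ p : G.Walk a x, (∀ t ∈ p.support, t ∈ A) ∧ G.Adj x y ∧ y ∉ A ∧ y ∈ w.support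
  | _, _, .nil, ha, hb => absurd ha hb
  | _, _, .cons (v := c) h q, ha, hb => by
    by_cases hc : c ∈ A
    · obtain ⟨x, y, p, hp, hxy, hy, hyq⟩ := q.exists_first_exit hc hb
      refine ⟨x, y, .cons h p, ?_, hxy, hy, by simp [hyq]⟩
      simpa [ha] using hp
    · exact ⟨_, c, .nil, by simpa using ha, h, hc, by simp⟩

theorem exists_walk_of_induce_connected {s : Set V} (hs : (G.induce s).Connected) {a b : V}
    (ha : a ∈ s) (hb : b ∈ s) : ∃ w : G.Walk a b, ∀ t ∈ w.support, t ∈ s := by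
  obtain ⟨w⟩ := hs.preconnected ⟨a, ha⟩ ⟨b, hb⟩
  have hw : ∀ t ∈ (w.map (Embedding.induce s).toHom).support, t ∈ s := by
    intro t ht
    rw [Walk.support_map, List.mem_map] at ht
    obtain ⟨t', -, rfl⟩ := ht
    exact t'.2
  exact ⟨_, hw⟩

theorem induce_connected_of_forall_walk_to {K B : Set V} (hK : (G.induce K).Connected)
    (hKB : K ⊆ B) (h : ∀ z ∈ B, ∃ y ∈ K, ∃ p : G.Walk z y, ∀ t ∈ p.support, t ∈ B) :
    (G.induce B).Connected := by
  obtain ⟨⟨c, hc⟩⟩ := hK.nonempty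
  rw [connected_iff_exists_forall_reachable]
  refine ⟨⟨c, hKB hc⟩, fun ⟨z, hz⟩ => ?_⟩
  obtain ⟨y, hy, p, hp⟩ := h z hz
  have hyc : (G.induce B).Reachable ⟨y, hKB hy⟩ ⟨c, hKB hc⟩ :=
    (hK.preconnected ⟨y, hy⟩ ⟨c, hc⟩).map (induceHomOfLE G hKB).toHom
  exact ((p.induce B hp).reachable.trans hyc).symm

theorem exists_adj_comm {A B : Set V} :
    (∃ a ∈ A, ∃ b ∈ B, G.Adj a b) ↔ ∃ b ∈ B, ∃ a ∈ A, G.Adj b a :=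
  ⟨fun ⟨a, ha, b, hb, hab⟩ => ⟨b, hb, a, ha, hab.symm⟩,
    fun ⟨b, hb, a, ha, hba⟩ => ⟨a, ha, b, hb, hba.symm⟩⟩

def ReachableAvoiding (G : SimpleGraph V) (X : Set V) (a b : V) : Prop :=
  ∃ w : G.Walk a b, ∀ t ∈ w.support, t ∉ X

variable {X Y : Set V} {a b c : V}

theorem ReachableAvoiding.notMem (h : ReachableAvoiding G X a b) : a ∉ X :=
  let ⟨w, hw⟩ := h
  hw a w.start_mem_support

theorem ReachableAvoiding.of_adj (h : ReachableAvoiding G X b c) (hab : G.Adj a b) (ha : a ∉ X) :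
    ReachableAvoiding G X a c :=
  let ⟨w, hw⟩ := h
  ⟨.cons hab w, by simpa [ha] using hw⟩

theorem ReachableAvoiding.mono (h : ReachableAvoiding G X a b) (hYX : Y ⊆ X) :
    ReachableAvoiding G Y a b :=
  let ⟨w, hw⟩ := h
  ⟨w, fun t ht htY => hw t ht (hYX htY)⟩

end Walks

section WitnessStructures

variable {V W : Type} {G : SimpleGraph V} {H : SimpleGraph W}

theorem IsWitnessStructure.exists_adj_sdiff_union {f : W → Set V}
    (hf : IsWitnessStructure G H f) {x y : W} (hxy : H.Adj x y) {M : Set V}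
    (hx : (f x \ M).Nonempty) : ∃ a ∈ f x \ M, ∃ b ∈ f y ∪ M, G.Adj a b := by
  obtain ⟨a, ha, b, hb, hab⟩ := (hf.2.2.2 x y hxy.ne).mpr hxy
  by_cases haM : a ∈ M
  · obtain ⟨c, hc⟩ := hx
    -- a walk inside `f x` from `f x \ M` to `a ∈ M` leaves `f x \ M` along an edge into `M`
    obtain ⟨w, hw⟩ := exists_walk_of_induce_connected (hf.2.1 x) hc.1 ha
    obtain ⟨x', y', p, hp, hxy', hy', hyw⟩ := w.exists_first_exit hc fun h => h.2 haM
    exact ⟨x', hp x' p.end_mem_support, y', Or.inr (by simpa [hw y' hyw] using hy'), hxy'⟩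
  · exact ⟨a, ⟨ha, haM⟩, b, Or.inl hb, hab⟩

theorem IsWitnessStructure.transfer {f g : W → Set V} (hf : IsWitnessStructure G H f) {x y : W}
    (hxy : H.Adj x y) {M : Set V} (hM : M ⊆ f x) (hx : (G.induce (f x \ M)).Connected)
    (hy : (G.induce (f y ∪ M)).Connected)
    (hMadj : ∀ z, z ≠ x → z ≠ y → ∀ a ∈ M, ∀ b ∈ f z, ¬ G.Adj a b)
    (hgx : g x = f x \ M) (hgy : g y = f y ∪ M) (hg : ∀ z, z ≠ x → z ≠ y → g z = f z) :
    IsWitnessStructure G H g := by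
  have hxy_edge := hf.exists_adj_sdiff_union hxy (let ⟨⟨a, ha⟩⟩ := hx.nonempty; ⟨a, ha⟩)
  obtain ⟨-, hconn, hpart, hadj⟩ := hf
  have hgconn : ∀ z, (G.induce (g z)).Connected := by
    intro z
    by_cases hzy : z = y
    · rwa [hzy, hgy]
    by_cases hzx : z = x
    · rwa [hzx, hgx]
    rw [hg z hzx hzy]
    exact hconn z
  have hmem : ∀ a ∉ M, ∀ z, a ∈ g z ↔ a ∈ f z := by
    intro a ha z
    by_cases hzy : z = y
    · simp [hzy, hgy, ha]
    by_cases hzx : z = x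
    · simp [hzx, hgx, ha]
    rw [hg z hzx hzy]
  have hedge : ∀ z₁ z₂, z₂ ≠ x → z₂ ≠ y →
      ((∃ a ∈ g z₁, ∃ b ∈ g z₂, G.Adj a b) ↔ ∃ a ∈ f z₁, ∃ b ∈ f z₂, G.Adj a b) := by
    intro z₁ z₂ hx₂ hy₂
    have hM' : ∀ a b, b ∈ f z₂ → G.Adj a b → a ∉ M :=
      fun a b hb hab ha => hMadj z₂ hx₂ hy₂ a ha b hb hab
    rw [hg z₂ hx₂ hy₂]
    constructor <;> rintro ⟨a, ha, b, hb, hab⟩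
    · exact ⟨a, (hmem a (hM' a b hb hab) z₁).mp ha, b, hb, hab⟩
    · exact ⟨a, (hmem a (hM' a b hb hab) z₁).mpr ha, b, hb, hab⟩
  refine ⟨fun z => ?_, hgconn, fun a => ?_, fun z₁ z₂ hz => ?_⟩
  · obtain ⟨⟨a, ha⟩⟩ := (hgconn z).nonempty
    exact ⟨a, ha⟩
  · by_cases ha : a ∈ M
    · refine ⟨y, show a ∈ g y by rw [hgy]; exact Or.inr ha, fun z (hz : a ∈ g z) => ?_⟩
      by_contra hzy
      by_cases hzx : z = x
      · rw [hzx, hgx] at hz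
        exact hz.2 ha
      · rw [hg z hzx hzy] at hz
        exact hzx ((hpart a).unique hz (hM ha))
    · simpa only [hmem a ha] using hpart a
  · by_cases h₂ : z₂ ≠ x ∧ z₂ ≠ y
    · rw [hedge z₁ z₂ h₂.1 h₂.2]
      exact hadj z₁ z₂ hz
    by_cases h₁ : z₁ ≠ x ∧ z₁ ≠ y
    · rw [exists_adj_comm, hedge z₂ z₁ h₁.1 h₁.2, exists_adj_comm]
      exact hadj z₁ z₂ hz
    obtain rfl | rfl : z₁ = x ∨ z₁ = y := by tauto
    · obtain rfl : z₂ = y := by tauto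
      simpa [hgx, hgy, hxy] using hxy_edge
    · obtain rfl : z₂ = x := by tauto
      rw [exists_adj_comm]
      simpa [hgx, hgy, hxy.symm] using hxy_edge

theorem IsWitnessStructure.exists_walk_of_le {k : ℕ} {f : Fin k → Set V}
    (hf : IsWitnessStructure G (pathGraph k) f) {i j : Fin k} (hij : i ≤ j) {a b : V}
    (ha : a ∈ f i) (hb : b ∈ f j) : ∃ w : G.Walk a b, ∀ t ∈ w.support, ∃ l, i ≤ l ∧ t ∈ f l := by
  obtain ⟨n, hn⟩ : ∃ n, (j : ℕ) = i + n := ⟨j - i, by omega⟩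
  induction n generalizing j b with
  | zero =>
    obtain rfl : j = i := Fin.ext hn
    obtain ⟨w, hw⟩ := exists_walk_of_induce_connected (hf.2.1 j) ha hb
    exact ⟨w, fun t ht => ⟨j, le_rfl, hw t ht⟩⟩
  | succ n ih =>
    let j' : Fin k := ⟨i + n, by omega⟩
    obtain ⟨c, hc, d, hd, hcd⟩ := (hf.2.2.2 j' j (Fin.ne_of_val_ne (by simp [j']; omega))).mpr
      (pathGraph_adj.mpr (Or.inl (by simp [j']; omega)))
    obtain ⟨w₁, hw₁⟩ := ih (j := j') (Fin.le_def.mpr (by simp [j'])) hc rfl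
    obtain ⟨w₂, hw₂⟩ := exists_walk_of_induce_connected (hf.2.1 j) hd hb
    refine ⟨w₁.append (.cons hcd w₂), fun t ht => ?_⟩
    rw [Walk.mem_support_append_iff, Walk.support_cons, List.mem_cons] at ht
    rcases ht with ht | rfl | ht
    · exact hw₁ t ht
    · exact hw₁ t (Walk.end_mem_support _)
    · exact ⟨j, hij, hw₂ t ht⟩

end WitnessStructures

section Closure

variable {V : Type} {G : SimpleGraph V} {u v : V} {Su S'u : Set V}

theorem closureOf_subset (hsub : S'u ⊆ Su) : closureOf G u v Su S'u ⊆ Su :=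
  Set.union_subset hsub (Set.sep_subset _ _)

theorem mem_closureOf_iff {s : V} (hs : s ∈ Su) (hs' : s ∉ S'u) :
    s ∈ closureOf G u v Su S'u ↔ ¬ ReachableAvoiding G (G.neighborSet u ∪ S'u) s v := by
  classical
  simp only [closureOf, ReachableAvoiding, Set.mem_union, hs', false_or, Set.mem_sep_iff, hs,
    true_and]
  push Not
  refine ⟨fun h w => ?_, fun h w _ => h w⟩
  obtain ⟨a, ha, haX⟩ := h w.bypass w.bypass_isPath
  exact ⟨a, w.support_bypass_subset_support ha, haX⟩

end Closure

namespace IsSolutionWith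

variable {V : Type} {G : SimpleGraph V} {k : ℕ} {u v : V} {f : Fin k → Set V} {Su Sv : Set V}

theorem bag_one (hsol : IsSolutionWith k G u v f Su Sv) (hk : 2 ≤ k) :
    f ⟨1, by omega⟩ = G.neighborSet u ∪ Su :=
  hsol.2.2.2.2.2.1 _ rfl

theorem bag_last (hsol : IsSolutionWith k G u v f Su Sv) (hk : 1 ≤ k) :
    f ⟨k - 1, by omega⟩ = {v} :=
  hsol.2.2.2.2.2.2.2 _ rfl

theorem notMem_neighborSet (hsol : IsSolutionWith k G u v f Su Sv) {s : V} (hs : s ∈ Su) :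
    s ∉ G.neighborSet u :=
  fun h => hsol.2.1 hs (Or.inl (Set.mem_insert_of_mem _ h))

theorem ne_right (hsol : IsSolutionWith k G u v f Su Sv) {s : V} (hs : s ∈ Su) : s ≠ v :=
  fun h => hsol.2.1 hs (Or.inr (h ▸ Set.mem_insert s _))

theorem bag_one_sdiff (hsol : IsSolutionWith k G u v f Su Sv) (hk : 2 ≤ k) {C : Set V}
    (hC : C ⊆ Su) : f ⟨1, by omega⟩ \ (Su \ C) = G.neighborSet u ∪ C := by
  rw [hsol.bag_one hk]
  ext x
  have hxN : x ∈ Su → x ∉ G.neighborSet u := hsol.notMem_neighborSet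
  have hxC : x ∈ C → x ∈ Su := @hC x
  simp only [Set.mem_sdiff, Set.mem_union]
  tauto

theorem mem_of_adj_of_mem_Su (hsol : IsSolutionWith k G u v f Su Sv) (hk : 3 ≤ k) {s t : V}
    (hs : s ∈ Su) (hst : G.Adj s t) : t ∈ G.neighborSet u ∪ Su ∪ f ⟨2, by omega⟩ := by
  have ⟨hf, _, _, _, hf0, _, _, _⟩ := hsol
  have hs1 : s ∈ f ⟨1, by omega⟩ := by
    rw [hsol.bag_one (by omega)]
    exact Or.inr hs
  obtain ⟨j, hj, -⟩ := hf.2.2.1 t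
  by_cases hj1 : j = ⟨1, by omega⟩
  · rw [hj1, hsol.bag_one (by omega)] at hj
    exact Or.inl hj
  have hj' := pathGraph_adj.mp ((hf.2.2.2 _ _ (Ne.symm hj1)).mp ⟨s, hs1, t, hj, hst⟩)
  rcases hj' with h | h
  · rw [show j = ⟨2, by omega⟩ from Fin.ext (by simp only at h ⊢; omega)] at hj
    exact Or.inr hj
  · rw [hf0 j (by simp only at h; omega)] at hj
    subst hj
    exact absurd hst.symm (hsol.notMem_neighborSet hs)

theorem not_adj_of_mem_Su (hsol : IsSolutionWith k G u v f Su Sv) (hk : 3 ≤ k) {z : Fin k}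
    (hz₁ : z ≠ ⟨1, by omega⟩) (hz₂ : z ≠ ⟨2, by omega⟩) {s b : V} (hs : s ∈ Su) (hb : b ∈ f z) :
    ¬ G.Adj s b := by
  intro hsb
  have hpart := hsol.1.2.2.1 b
  rcases hsol.mem_of_adj_of_mem_Su hk hs hsb with hb' | hb'
  · rw [← hsol.bag_one (by omega)] at hb'
    exact hz₁ (hpart.unique hb hb')
  · exact hz₂ (hpart.unique hb hb')

theorem nonempty_walk_of_mem_Su (hsol : IsSolutionWith k G u v f Su Sv) (hk : 3 ≤ k) {s : V}
    (hs : s ∈ Su) : Nonempty (G.Walk s v) := by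
  obtain ⟨w, -⟩ := hsol.1.exists_walk_of_le (i := ⟨1, by omega⟩) (j := ⟨k - 1, by omega⟩)
    (Fin.le_def.mpr (by simp; omega)) (by rw [hsol.bag_one (by omega)]; exact Or.inr hs)
    (by rw [hsol.bag_last (by omega)]; rfl)
  exact ⟨w⟩

theorem reachableAvoiding_of_mem_bag_two (hsol : IsSolutionWith k G u v f Su Sv) (hk : 3 ≤ k)
    {t : V} (ht : t ∈ f ⟨2, by omega⟩) : ReachableAvoiding G (G.neighborSet u ∪ Su) t v := by
  obtain ⟨w, hw⟩ := hsol.1.exists_walk_of_le (j := ⟨k - 1, by omega⟩)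
    (Fin.le_def.mpr (by simp; omega)) ht (by rw [hsol.bag_last (by omega)]; rfl)
  refine ⟨w, fun a ha ha₁ => ?_⟩
  obtain ⟨l, hl, hal⟩ := hw a ha
  rw [← hsol.bag_one (by omega)] at ha₁
  have := Fin.le_def.mp hl
  simp [(hsol.1.2.2.1 a).unique hal ha₁] at this

theorem connected_neighborSet_union_closureOf (hsol : IsSolutionWith k G u v f Su Sv)
    (hk : 3 ≤ k) {S'u : Set V} (hsub : S'u ⊆ Su)
    (hconn : (G.induce (G.neighborSet u ∪ S'u)).Connected) :
    (G.induce (G.neighborSet u ∪ closureOf G u v Su S'u)).Connected := by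
  set X := G.neighborSet u ∪ S'u
  set C := closureOf G u v Su S'u
  have hXB : X ⊆ G.neighborSet u ∪ C := Set.union_subset_union_right _ Set.subset_union_left
  refine induce_connected_of_forall_walk_to hconn hXB fun z hz => ?_
  by_cases hzX : z ∈ X
  · exact ⟨z, hzX, .nil, by simpa using hXB hzX⟩
  have hzSu : z ∈ Su := closureOf_subset hsub (hz.resolve_left fun h => hzX (Or.inl h))
  -- the vertices of `Su \ S'u` from which every walk to `v` meets `X` form a part of `C`
  -- that can only be left through `X`
  set A := {t | t ∈ Su ∧ t ∉ X ∧ ¬ ReachableAvoiding G X t v}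
  have hAC : A ⊆ C := fun t ht => (mem_closureOf_iff ht.1 fun h => ht.2.1 (Or.inr h)).mpr ht.2.2
  have hzA : z ∈ A := ⟨hzSu, hzX, (mem_closureOf_iff hzSu fun h => hzX (Or.inr h)).mp
    (hz.resolve_left fun h => hzX (Or.inl h))⟩
  obtain ⟨w⟩ := hsol.nonempty_walk_of_mem_Su hk hzSu
  obtain ⟨x, y, p, hp, hxy, hyA, -⟩ := w.exists_first_exit hzA fun hv => hsol.ne_right hv.1 rfl
  obtain ⟨hxSu, hxX, hx⟩ := hp x p.end_mem_support
  have hyX : y ∈ X := by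
    by_contra hyX
    refine hx (ReachableAvoiding.of_adj ?_ hxy hxX)
    rcases hsol.mem_of_adj_of_mem_Su hk hxSu hxy with (hy | hy) | hy
    · exact absurd (Or.inl hy) hyX
    · by_contra h
      exact hyA ⟨hy, hyX, h⟩
    · exact (hsol.reachableAvoiding_of_mem_bag_two hk hy).mono
        (Set.union_subset_union_right _ hsub)
  refine ⟨y, hyX, p.concat hxy, fun t ht => ?_⟩
  rw [Walk.support_concat, List.mem_append, List.mem_singleton] at ht
  rcases ht with ht | rfl
  · exact Or.inr (hAC (hp t ht))
  · exact hXB hyX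

theorem connected_bag_two_union_diff_closureOf (hsol : IsSolutionWith k G u v f Su Sv)
    (hk : 3 ≤ k) (S'u : Set V) :
    (G.induce (f ⟨2, by omega⟩ ∪ (Su \ closureOf G u v Su S'u))).Connected := by
  set X := G.neighborSet u ∪ S'u
  set C := closureOf G u v Su S'u
  refine induce_connected_of_forall_walk_to (hsol.1.2.1 _) Set.subset_union_left fun z hz => ?_
  rcases hz with hz | ⟨hzSu, hzC⟩
  · exact ⟨z, hz, .nil, by simp [hz]⟩
  obtain ⟨w, hw⟩ : ReachableAvoiding G X z v :=
    not_not.mp ((mem_closureOf_iff hzSu fun h => hzC (Or.inl h)).not.mp hzC)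
  set A := {t | t ∈ Su ∧ ReachableAvoiding G X t v}
  obtain ⟨x, y, p, hp, hxy, hyA, hyw⟩ :=
    w.exists_first_exit (A := A) ⟨hzSu, w, hw⟩ fun hv => hsol.ne_right hv.1 rfl
  have hyX : y ∉ X := hw y hyw
  have hy₂ : y ∈ f ⟨2, by omega⟩ := by
    rcases hsol.mem_of_adj_of_mem_Su hk (hp x p.end_mem_support).1 hxy with (hy | hy) | hy
    · exact absurd (Or.inl hy) hyX
    · exact absurd ⟨hy, (hp x p.end_mem_support).2.of_adj hxy.symm hyX⟩ hyA
    · exact hy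
  refine ⟨y, hy₂, p.concat hxy, fun t ht => ?_⟩
  rw [Walk.support_concat, List.mem_append, List.mem_singleton] at ht
  rcases ht with ht | rfl
  · obtain ⟨htSu, htX⟩ := hp t ht
    exact Or.inr ⟨htSu, fun htC =>
      (mem_closureOf_iff htSu fun h => htX.notMem (Or.inr h)).mp htC htX⟩
  · exact Or.inl hy₂

end IsSolutionWith

theorem stmt_10_general {V : Type} (G : SimpleGraph V) (k : ℕ) (hk : 4 ≤ k)
    (u v : V) (f : Fin k → Set V) (Su Sv : Set V)
    (hsol : IsSolutionWith k G u v f Su Sv)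
    (S'u : Set V) (hsub : S'u ⊆ Su)
    (hconn : (G.induce (G.neighborSet u ∪ S'u)).Connected) :
    IsSolutionWith k G u v
      (fun i =>
        if (i : ℕ) = 1 then G.neighborSet u ∪ closureOf G u v Su S'u
        else if (i : ℕ) = 2 then f i ∪ (Su \ closureOf G u v Su S'u)
        else f i)
      (closureOf G u v Su S'u)
      (if k = 4 then Sv ∪ (Su \ closureOf G u v Su S'u) else Sv) := by
  have hk3 : 3 ≤ k := by omega
  have ⟨hf, hSuT, hSvT, hdisj, hf0, _, hfk2, hfk1⟩ := hsol
  set C := closureOf G u v Su S'u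
  have hCSu : C ⊆ Su := closureOf_subset hsub
  have hbag₁ := hsol.bag_one_sdiff (by omega) hCSu
  refine ⟨hf.transfer (x := ⟨1, by omega⟩) (y := ⟨2, by omega⟩) (pathGraph_adj.mpr (Or.inl rfl))
      (fun s hs => by rw [hsol.bag_one (by omega)]; exact Or.inr hs.1)
      (hbag₁ ▸ hsol.connected_neighborSet_union_closureOf hk3 hsub hconn)
      (hsol.connected_bag_two_union_diff_closureOf hk3 S'u)
      (fun z hz₁ hz₂ s hs b hb => hsol.not_adj_of_mem_Su hk3 hz₁ hz₂ hs.1 hb)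
      (by simpa using hbag₁.symm) (by simp; rfl) (fun z hz₁ hz₂ => ?_),
    hCSu.trans hSuT, ?_, ?_, fun i hi => ?_, fun i hi => by simp [hi], fun i hi => ?_,
    fun i hi => ?_⟩
  · rw [Ne, Fin.ext_iff] at hz₁ hz₂
    simp only [hz₁, hz₂, if_false]
  · split_ifs
    exacts [Set.union_subset hSvT (Set.sdiff_subset.trans hSuT), hSvT]
  · split_ifs
    exacts [Set.disjoint_union_right.mpr ⟨hdisj.mono_left hCSu, Set.disjoint_sdiff_right⟩,
      hdisj.mono_left hCSu]
  · simp [hi, hf0 i hi]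
  · dsimp only
    rw [if_neg (by omega), hfk2 i hi]
    split_ifs <;> first | omega | exact Set.union_assoc _ _ _ | rfl
  · dsimp only
    rw [if_neg (by omega), if_neg (by omega), hfk1 i hi]

theorem stmt_10 {V : Type} [Fintype V] (G : SimpleGraph V) (k : ℕ) (hk : 4 ≤ k)
    (u v : V) (f : Fin k → Set V) (Su Sv : Set V)
    (hsol : IsSolutionWith k G u v f Su Sv)
    (S'u : Set V) (hsub : S'u ⊆ Su)
    (hconn : (G.induce (G.neighborSet u ∪ S'u)).Connected) :
    IsSolutionWith k G u v
      (fun i =>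
        if (i : ℕ) = 1 then G.neighborSet u ∪ closureOf G u v Su S'u
        else if (i : ℕ) = 2 then f i ∪ (Su \ closureOf G u v Su S'u)
        else f i)
      (closureOf G u v Su S'u)
      (if k = 4 then Sv ∪ (Su \ closureOf G u v Su S'u) else Sv) :=
  stmt_10_general G k hk u v f Su Sv hsol S'u hsub hconn
end

section
/- Let s ≥ 0 and k ≥ 4, and let (G,u,v) be an instance of P_k-Suitability where G is (sP_1+P_4)-free. Then (G,u,v) has a solution if and only if it has an α-constant solution, where α = (s+2)(2s+4). -/
open SimpleGraph

/-- A solution `(f, Su, Sv)` is `α`-constant if `Su` contains a subset `S'` of size at most `α`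
with `N(u) ∪ S'` inducing a connected subgraph of `G`, or `Sv` contains a subset `S'` of size
at most `α` with `N(v) ∪ S'` inducing a connected subgraph of `G`. -/
def IsAlphaConstant {V : Type} (G : SimpleGraph V) (u v : V) (Su Sv : Set V) (α : ℕ) : Prop :=
  (∃ S' ⊆ Su, S'.ncard ≤ α ∧ (G.induce (G.neighborSet u ∪ S')).Connected) ∨
  (∃ S' ⊆ Sv, S'.ncard ≤ α ∧ (G.induce (G.neighborSet v ∪ S')).Connected)

/-!
Every solution has the connected bag `N(u) ∪ S_u`, so it suffices that every connected
`(sP₁ + P₄)`-free graph has a connected dominating set `D` with at most `(s + 2)(2s + 4)`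
vertices: applied to the bag, `N(u) ∪ (D ∩ S_u)` is then connected.

If the graph is `P₄`-free it has diameter at most 2, and for a fixed vertex `a` the common
neighbourhoods of `a` with its non-neighbours form a chain, so `a` and a common neighbour from
the smallest one dominate. Otherwise fix an induced `P₄`; a maximal independent set `F` among
the vertices anticomplete to it has fewer than `s` elements. Shortest paths have length at most
`2s + 2`, since a longer one contains an induced `sP₁ + P₄`, so joining `F` and the `P₄` to one
vertex of the `P₄` by shortest paths gives `D`.
-/

namespace SimpleGraph

variable {V U α β : Type*} {G : SimpleGraph V}

namespace Embedding

def ofPairwiseNotAdj (f : α ↪ V) (hf : ∀ x y, ¬G.Adj (f x) (f y)) :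
    (⊥ : SimpleGraph α) ↪g G where
  toEmbedding := f
  map_rel_iff' := by simp [hf]

def sumElim {H₁ : SimpleGraph α} {H₂ : SimpleGraph β} (f : H₁ ↪g G) (g : H₂ ↪g G)
    (hfg : ∀ x y, f x ≠ g y ∧ ¬G.Adj (f x) (g y)) : H₁ ⊕g H₂ ↪g G where
  toFun := Sum.elim f g
  inj' := by
    rintro (x | x) (y | y) h
    · exact congrArg Sum.inl (f.injective h)
    · exact absurd h (hfg x y).1
    · exact absurd h.symm (hfg y x).1
    · exact congrArg Sum.inr (g.injective h)
  map_rel_iff' := by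
    rintro (x | x) (y | y)
    · exact f.map_adj_iff
    · exact iff_of_false (hfg x y).2 (by simp)
    · exact iff_of_false (fun h => (hfg y x).2 h.symm) (by simp)
    · exact g.map_adj_iff

def pathGraphCastLE {m n : ℕ} (h : m ≤ n) : pathGraph m ↪g pathGraph n where
  toEmbedding := Fin.castLEEmb h
  map_rel_iff' := by simp [pathGraph_adj]

end Embedding

def botSumPathGraphFourEmbedding (s : ℕ) :
    (⊥ : SimpleGraph (Fin s)) ⊕g pathGraph 4 ↪g pathGraph (2 * s + 4) :=
  Embedding.sumElim
    (Embedding.ofPairwiseNotAdj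
      ⟨fun i => ⟨2 * i + 5, by omega⟩, fun i j h => by simp only [Fin.mk.injEq] at h; omega⟩
      fun i j => show ¬(pathGraph _).Adj ⟨2 * i + 5, _⟩ ⟨2 * j + 5, _⟩ by
        simp only [pathGraph_adj]; omega)
    (Embedding.pathGraphCastLE (by omega))
    fun i j => show ⟨2 * i + 5, _⟩ ≠ Fin.castLE (by omega) j ∧
        ¬(pathGraph _).Adj ⟨2 * i + 5, _⟩ (Fin.castLE (by omega) j) by
      simp only [pathGraph_adj, Ne, Fin.ext_iff, Fin.val_castLE]; omega

namespace Walk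

lemma dist_getVert_of_length_eq_dist {u v : V} (p : G.Walk u v) (hp : p.length = G.dist u v)
    {i j : ℕ} (hij : i ≤ j) (hj : j ≤ p.length) :
    G.dist (p.getVert i) (p.getVert j) = j - i := by
  have h := length_eq_dist_of_subwalk hp ((isSubwalk_take _ (j - i)).trans (isSubwalk_drop p i))
  rw [take_length, drop_length, drop_getVert, Nat.add_sub_cancel' hij] at h
  omega

def pathGraphEmbeddingOfLengthEqDist {u v : V} (p : G.Walk u v) (hp : p.length = G.dist u v) :
    pathGraph (p.length + 1) ↪g G :=
  have hdist (i j : Fin (p.length + 1)) :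
      G.dist (p.getVert i) (p.getVert j) = (j - i : ℕ) + (i - j : ℕ) := by
    rcases le_total (i : ℕ) j with h | h
    · rw [p.dist_getVert_of_length_eq_dist hp h (by omega)]; omega
    · rw [dist_comm, p.dist_getVert_of_length_eq_dist hp h (by omega)]; omega
  { toFun := fun i => p.getVert i
    inj' := fun i j h => by
      have := hdist i j
      simp only [h, dist_self] at this
      omega
    map_rel_iff' := fun {i j} => by
      change G.Adj (p.getVert i) (p.getVert j) ↔ _
      rw [← dist_eq_one_iff_adj, hdist, pathGraph_adj]
      omega }

lemma ncard_support_le {u v : V} (p : G.Walk u v) :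
    {w | w ∈ p.support}.ncard ≤ p.length + 1 := by
  classical
  have h : {w | w ∈ p.support} = ↑p.support.toFinset := by ext; simp
  rw [h, Set.ncard_coe_finset, ← p.length_support]
  exact p.support.toFinset_card_le

end Walk

lemma dist_le_of_isEmpty_pathGraph_embedding {n : ℕ} (h : IsEmpty (pathGraph (n + 2) ↪g G))
    {u v : V} (huv : G.Reachable u v) : G.dist u v ≤ n := by
  obtain ⟨p, hp⟩ := huv.exists_walk_length_eq_dist
  by_contra! hn
  exact h.false ((p.pathGraphEmbeddingOfLengthEqDist hp).comp
    (Embedding.pathGraphCastLE (by omega)))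

lemma Connected.induce_image {H : SimpleGraph U} (φ : H →g G) {D : Set U}
    (hD : (H.induce D).Connected) : (G.induce (φ '' D)).Connected :=
  hD.map (induceHom φ (Set.mapsTo_image φ D)) (Set.surjective_mapsTo_image_restrict φ D)

lemma induce_union_connected_of_forall_adj {A D : Set V} (hD : (G.induce D).Connected)
    (hA : ∀ a ∈ A, a ∉ D → ∃ x ∈ D, G.Adj x a) : (G.induce (A ∪ D)).Connected := by
  obtain ⟨⟨d, hd⟩⟩ := hD.nonempty
  refine G.induce_connected_of_patches d (Or.inr hd) fun {v} hv => ?_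
  by_cases hvD : v ∈ D
  · exact ⟨D, Set.subset_union_right, hd, hvD, hD.preconnected _ _⟩
  · obtain ⟨x, hxD, hxv⟩ := hA v (hv.resolve_right hvD) hvD
    have hconn : (G.induce (D ∪ {v})).Connected := connected_induce_union hD.preconnected
      (by rw [induce_singleton_eq_top]; exact preconnected_top) hxD rfl hxv
    exact ⟨D ∪ {v}, Set.union_subset Set.subset_union_right (Set.singleton_subset_iff.mpr hv),
      Or.inl hd, Or.inr rfl, hconn.preconnected _ _⟩

lemma exists_connected_superset_ncard_le (hconn : G.Connected) {m : ℕ} (a : V) (J : Finset V)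
    (hJ : ∀ x ∈ J, G.dist x a ≤ m) :
    ∃ D : Set V, a ∈ D ∧ ↑J ⊆ D ∧ (G.induce D).Connected ∧ D.ncard ≤ 1 + J.card * (m + 1) := by
  classical
  induction J using Finset.induction_on with
  | empty =>
    refine ⟨{a}, rfl, by simp, ?_, by simp⟩
    rw [induce_singleton_eq_top]
    exact connected_top
  | insert x J hxJ ih =>
    obtain ⟨D, haD, hJD, hD, hcard⟩ := ih fun y hy => hJ y (Finset.mem_insert_of_mem hy)
    obtain ⟨p, hp⟩ := (hconn x a).exists_walk_length_eq_dist
    refine ⟨D ∪ {w | w ∈ p.support}, Or.inl haD, ?_, ?_, ?_⟩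
    · rw [Finset.coe_insert, Set.insert_subset_iff]
      exact ⟨Or.inr p.start_mem_support, hJD.trans Set.subset_union_left⟩
    · exact induce_union_connected hD.preconnected p.connected_induce_support.preconnected
        ⟨a, haD, p.end_mem_support⟩
    · have hlen : p.length ≤ m := hp ▸ hJ x (Finset.mem_insert_self x J)
      calc (D ∪ {w | w ∈ p.support}).ncard
          ≤ D.ncard + {w | w ∈ p.support}.ncard := Set.ncard_union_le _ _
        _ ≤ 1 + J.card * (m + 1) + (m + 1) := by grw [hcard, p.ncard_support_le, hlen]
        _ = 1 + (insert x J).card * (m + 1) := by rw [Finset.card_insert_of_notMem hxJ]; ring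

def IsDominating (G : SimpleGraph V) (D : Set V) : Prop :=
  ∀ w ∉ D, ∃ x ∈ D, G.Adj x w

lemma nonempty_pathGraph_four_embedding {a b c d : V} (hab : G.Adj a b) (hbc : G.Adj b c)
    (hcd : G.Adj c d) (hac : ¬G.Adj a c) (had : ¬G.Adj a d) (hbd : ¬G.Adj b d) :
    Nonempty (pathGraph 4 ↪g G) := by
  have hac' : a ≠ c := fun h => had (h ▸ hcd)
  have had' : a ≠ d := fun h => hac (h ▸ hcd.symm)
  have hbd' : b ≠ d := fun h => had (h ▸ hab)
  refine ⟨⟨⟨![a, b, c, d], fun i j h => ?_⟩, fun {i j} => ?_⟩⟩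
  · fin_cases i <;> fin_cases j <;> simp_all [hab.ne, hbc.ne, hcd.ne, hab.ne.symm, hbc.ne.symm,
      hcd.ne.symm, hac'.symm, had'.symm, hbd'.symm]
  · change G.Adj (![a, b, c, d] i) (![a, b, c, d] j) ↔ _
    fin_cases i <;> fin_cases j <;> simp [pathGraph_adj, hab, hbc, hcd, hac, had, hbd, hab.symm,
      hbc.symm, hcd.symm, G.adj_comm _ a, G.adj_comm _ b]

section PathGraphFourFree

variable (hP4 : IsEmpty (pathGraph 4 ↪g G))
include hP4

lemma commonNeighbors_nonempty_of_isEmpty_pathGraph_four (hconn : G.Connected) {a z : V}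
    (hne : a ≠ z) (hadj : ¬G.Adj a z) : (G.commonNeighbors a z).Nonempty := by
  by_contra h
  have hlt := two_lt_edist_iff.mpr ⟨hne, hadj, Set.not_nonempty_iff_eq_empty.mp h⟩
  have hle := dist_le_of_isEmpty_pathGraph_embedding (n := 2) hP4 (hconn a z)
  rw [← (hconn a z).coe_dist_eq_edist] at hlt
  norm_cast at hlt
  omega

lemma commonNeighbors_subset_or_subset_of_isEmpty_pathGraph_four {a z₁ z₂ : V}
    (h₁ : ¬G.Adj a z₁) (h₂ : ¬G.Adj a z₂) :
    G.commonNeighbors a z₁ ⊆ G.commonNeighbors a z₂ ∨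
      G.commonNeighbors a z₂ ⊆ G.commonNeighbors a z₁ := by
  by_contra! h
  obtain ⟨b₁, hb₁, hb₁z₂⟩ := Set.not_subset.mp h.1
  obtain ⟨b₂, hb₂, hb₂z₁⟩ := Set.not_subset.mp h.2
  rw [mem_commonNeighbors] at hb₁ hb₂ hb₁z₂ hb₂z₁
  replace hb₁z₂ : ¬G.Adj z₂ b₁ := fun h => hb₁z₂ ⟨hb₁.1, h⟩
  replace hb₂z₁ : ¬G.Adj z₁ b₂ := fun h => hb₂z₁ ⟨hb₂.1, h⟩
  by_cases hz : G.Adj z₁ z₂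
  · exact (nonempty_pathGraph_four_embedding hz hb₂.2 hb₂.1.symm hb₂z₁
      (fun h => h₁ h.symm) (fun h => h₂ h.symm)).elim hP4.false
  by_cases hb : G.Adj b₁ b₂
  · exact (nonempty_pathGraph_four_embedding hb₁.2 hb hb₂.2.symm hb₂z₁ hz
      (fun h => hb₁z₂ h.symm)).elim hP4.false
  exact (nonempty_pathGraph_four_embedding hb₁.2 hb₁.1.symm hb₂.1 (fun h => h₁ h.symm) hb₂z₁
    hb).elim hP4.false

theorem exists_connected_dominating_ncard_le_two_of_isEmpty_pathGraph_four [Finite V]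
    (hconn : G.Connected) :
    ∃ D : Set V, (G.induce D).Connected ∧ G.IsDominating D ∧ D.ncard ≤ 2 := by
  obtain ⟨a⟩ := hconn.nonempty
  set Z := {z | z ≠ a ∧ ¬G.Adj a z}
  rcases Z.eq_empty_or_nonempty with hZ | hZ
  · refine ⟨{a}, ?_, fun w hw => ⟨a, rfl, ?_⟩, by simp⟩
    · rw [induce_singleton_eq_top]
      exact connected_top
    · by_contra h
      exact hZ.subset ⟨hw, h⟩
  obtain ⟨z₀, hz₀, hmin⟩ :=
    Z.exists_min_image (fun z => (G.commonNeighbors a z).ncard) Z.toFinite hZ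
  obtain ⟨b, hb⟩ :=
    commonNeighbors_nonempty_of_isEmpty_pathGraph_four hP4 hconn (Ne.symm hz₀.1) hz₀.2
  have hZb : ∀ z ∈ Z, G.Adj z b := by
    intro z hz
    rcases commonNeighbors_subset_or_subset_of_isEmpty_pathGraph_four hP4 hz₀.2 hz.2 with h | h
    · exact (h hb).2
    · rw [← Set.eq_of_subset_of_ncard_le h (hmin z hz)] at hb
      exact hb.2
  refine ⟨{a, b}, induce_pair_connected_of_adj hb.1, fun w hw => ?_,
    (Set.ncard_insert_le a {b}).trans (by simp)⟩
  by_cases haw : G.Adj a w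
  · exact ⟨a, Or.inl rfl, haw⟩
  · exact ⟨b, Or.inr rfl, (hZb w ⟨fun h => hw (Or.inl h), haw⟩).symm⟩

end PathGraphFourFree

section BotSumPathGraphFourFree

variable {s : ℕ} (hfree : IsEmpty ((⊥ : SimpleGraph (Fin s)) ⊕g pathGraph 4 ↪g G))
include hfree

lemma dist_le_of_isEmpty_bot_sum_pathGraph_four {u v : V} (huv : G.Reachable u v) :
    G.dist u v ≤ 2 * s + 2 :=
  dist_le_of_isEmpty_pathGraph_embedding
    ⟨fun e => hfree.false (e.comp (botSumPathGraphFourEmbedding s))⟩ huv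

lemma card_lt_of_isIndepSet_of_isEmpty_bot_sum_pathGraph_four (e : pathGraph 4 ↪g G)
    {F : Finset V} (hF : G.IsIndepSet F) (hFe : ∀ x ∈ F, ∀ i, x ≠ e i ∧ ¬G.Adj x (e i)) :
    F.card < s := by
  by_contra! h
  let ι : Fin s ↪ V :=
    (Fin.castLEEmb h).trans (F.equivFin.symm.toEmbedding.trans (Function.Embedding.subtype _))
  have hι (i : Fin s) : ι i ∈ F := (F.equivFin.symm _).2
  refine hfree.false (Embedding.sumElim (Embedding.ofPairwiseNotAdj ι fun i j hij => ?_) e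
    fun i j => hFe _ (hι i) j)
  by_cases hne : ι i = ι j
  · exact G.irrefl (hne ▸ hij)
  · exact hF (hι i) (hι j) hne hij

theorem exists_connected_dominating_of_pathGraph_four_embedding [Finite V] (hconn : G.Connected)
    (e : pathGraph 4 ↪g G) :
    ∃ D : Set V, (G.induce D).Connected ∧ G.IsDominating D ∧
      D.ncard ≤ (s + 2) * (2 * s + 4) := by
  classical
  set X := {x | ∀ i, x ≠ e i ∧ ¬G.Adj x (e i)}
  obtain ⟨F, -, hFmax⟩ := Finite.exists_le_maximal (α := Finset V)
    (p := fun F => ↑F ⊆ X ∧ G.IsIndepSet F) (a := ∅) (by simp)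
  have hFcard := card_lt_of_isIndepSet_of_isEmpty_bot_sum_pathGraph_four hfree e hFmax.1.2
    fun x hx => hFmax.1.1 hx
  have hXF : ∀ x ∈ X, x ∉ F → ∃ y ∈ F, G.Adj y x := by
    intro x hx hxF
    by_contra! h
    refine hxF (hFmax.2 (y := insert x F) ⟨?_, ?_⟩ (Finset.subset_insert x F)
      (Finset.mem_insert_self x F))
    · rw [Finset.coe_insert, Set.insert_subset_iff]
      exact ⟨hx, hFmax.1.1⟩
    · rw [Finset.coe_insert]
      exact hFmax.1.2.insert fun y hy _ => ⟨fun h' => h y hy h'.symm, h y hy⟩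
  set J := F ∪ {e 1, e 2, e 3}
  obtain ⟨D, he₀D, hJD, hD, hDcard⟩ := exists_connected_superset_ncard_le hconn (e 0) J
    fun x _ => dist_le_of_isEmpty_bot_sum_pathGraph_four hfree (hconn x (e 0))
  have heD (i : Fin 4) : e i ∈ D := by
    fin_cases i
    exacts [he₀D, hJD (by simp [J]), hJD (by simp [J]), hJD (by simp [J])]
  refine ⟨D, hD, fun w hw => ?_, ?_⟩
  · by_cases hwX : w ∈ X
    · obtain ⟨y, hyF, hyw⟩ := hXF w hwX fun h => hw (hJD (Finset.mem_union_left _ h))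
      exact ⟨y, hJD (Finset.mem_union_left _ hyF), hyw⟩
    · simp only [X, Set.mem_ofPred_eq, not_forall, not_and_or, not_not] at hwX
      obtain ⟨i, rfl | hadj⟩ := hwX
      · exact absurd (heD i) hw
      · exact ⟨e i, heD i, hadj.symm⟩
  · have hJ : J.card ≤ s + 2 :=
      (Finset.card_union_le _ _).trans (by grw [Finset.card_le_three]; omega)
    calc D.ncard ≤ 1 + J.card * (2 * s + 2 + 1) := hDcard
      _ ≤ (s + 2) * (2 * s + 4) := by nlinarith

theorem exists_connected_dominating_of_isEmpty_bot_sum_pathGraph_four [Finite V]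
    (hconn : G.Connected) :
    ∃ D : Set V, (G.induce D).Connected ∧ G.IsDominating D ∧
      D.ncard ≤ (s + 2) * (2 * s + 4) := by
  by_cases hP4 : Nonempty (pathGraph 4 ↪g G)
  · exact exists_connected_dominating_of_pathGraph_four_embedding hfree hconn hP4.some
  · obtain ⟨D, hD, hdom, hcard⟩ :=
      exists_connected_dominating_ncard_le_two_of_isEmpty_pathGraph_four
        (not_nonempty_iff.mp hP4) hconn
    exact ⟨D, hD, hdom, hcard.trans (by nlinarith)⟩

theorem exists_subset_ncard_le_induce_union_connected [Finite V] {A B : Set V}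
    (hAB : (G.induce (A ∪ B)).Connected) :
    ∃ S ⊆ B, S.ncard ≤ (s + 2) * (2 * s + 4) ∧ (G.induce (A ∪ S)).Connected := by
  let φ : G.induce (A ∪ B) ↪g G := Embedding.induce _
  obtain ⟨D, hD, hdom, hcard⟩ := exists_connected_dominating_of_isEmpty_bot_sum_pathGraph_four
    ⟨fun e => hfree.false (φ.comp e)⟩ hAB
  have hDAB : φ '' D ⊆ A ∪ B := by
    rintro _ ⟨x, -, rfl⟩
    exact x.2
  refine ⟨φ '' D ∩ B, Set.inter_subset_right, ?_, ?_⟩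
  · grw [Set.ncard_le_ncard Set.inter_subset_left, Set.ncard_image_le]
    exact hcard
  · rw [Set.union_inter_distrib_left,
      Set.inter_eq_left.mpr (Set.union_subset Set.subset_union_left hDAB)]
    refine induce_union_connected_of_forall_adj (Connected.induce_image φ.toHom hD)
      fun a ha haD => ?_
    obtain ⟨x, hx, hxa⟩ := hdom ⟨a, Or.inl ha⟩ fun h => haD ⟨_, h, rfl⟩
    exact ⟨φ x, ⟨x, hx, rfl⟩, hxa⟩

end BotSumPathGraphFourFree

end SimpleGraph

theorem stmt_11 {V : Type} [Fintype V] (G : SimpleGraph V) (s k : ℕ) (hk : 4 ≤ k)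
    (hfree : IsEmpty (((⊥ : SimpleGraph (Fin s)) ⊕g pathGraph 4) ↪g G)) (u v : V) :
    (∃ (f : Fin k → Set V) (Su Sv : Set V), IsSolutionWith k G u v f Su Sv) ↔
    (∃ (f : Fin k → Set V) (Su Sv : Set V), IsSolutionWith k G u v f Su Sv ∧
      IsAlphaConstant G u v Su Sv ((s + 2) * (2 * s + 4))) := by
  refine ⟨fun ⟨f, Su, Sv, hsol⟩ => ?_, fun ⟨f, Su, Sv, hsol, _⟩ => ⟨f, Su, Sv, hsol⟩⟩
  have hbag : (G.induce (G.neighborSet u ∪ Su)).Connected := by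
    obtain ⟨hwit, -, -, -, -, hbag₁, -⟩ := hsol
    rw [← hbag₁ ⟨1, by omega⟩ rfl]
    exact hwit.2.1 _
  obtain ⟨S, hSSu, hScard, hSconn⟩ := exists_subset_ncard_le_induce_union_connected hfree hbag
  exact ⟨f, Su, Sv, hsol, Or.inl ⟨S, hSSu, hScard, hSconn⟩⟩
end

section
/- Let 𝓗 be a hypergraph in which every hyperedge is nonempty and S_n = Q. Then the graph G_𝓗 is (2P_1+2P_2, 3P_2, 2P_3)-free. -/
open SimpleGraph

/-- The vertices of the graph `G_𝓗` associated with a hypergraph with elements `q_1, …, q_m`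
(represented by `Fin m`) and hyperedges `S_1, …, S_n` (represented by `Fin n`):
the elements `q x`, the hyperedge vertices `S j`, their copies `S' j`,
and two extra vertices `t1` and `t2`. -/
inductive HVert (m n : ℕ) : Type
  | q : Fin m → HVert m n
  | S : Fin n → HVert m n
  | S' : Fin n → HVert m n
  | t1 : HVert m n
  | t2 : HVert m n
  deriving DecidableEq

/-- The graph `G_𝓗` associated with the hypergraph `(Fin m, S)`: `q x` is adjacent to `S j`
and to `S' j` iff `x ∈ S j`; every `S j` is adjacent to every `S' l`; the elements form a
clique; `t1` is adjacent to every `S j`; `t2` is adjacent to every `S' j`. -/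
def GH (m n : ℕ) (S : Fin n → Set (Fin m)) : SimpleGraph (HVert m n) :=
  SimpleGraph.fromRel (fun a b =>
    match a, b with
    | .q _, .q _ => True
    | .q x, .S j => x ∈ S j
    | .q x, .S' j => x ∈ S j
    | .S _, .S' _ => True
    | .t1, .S _ => True
    | .t2, .S' _ => True
    | _, _ => False)

def R {m n : ℕ} (S : Fin n → Set (Fin m)) (a b : HVert m n) : Prop :=
  match a, b with
  | .q _, .q _ => True
  | .q x, .S j => x ∈ S j
  | .q x, .S' j => x ∈ S j
  | .S _, .S' _ => True
  | .t1, .S _ => True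
  | .t2, .S' _ => True
  | _, _ => False

lemma GH_adj {m n : ℕ} {S : Fin n → Set (Fin m)} {a b : HVert m n} :
    (GH m n S).Adj a b ↔ a ≠ b ∧ (R S a b ∨ R S b a) := Iff.rfl

lemma L {m n : ℕ} {S : Fin n → Set (Fin m)} {a b c d : HVert m n}
    (hab : (GH m n S).Adj a b) (hcd : (GH m n S).Adj c d)
    (hac : ¬ (GH m n S).Adj a c) (had : ¬ (GH m n S).Adj a d)
    (hbc : ¬ (GH m n S).Adj b c) (hbd : ¬ (GH m n S).Adj b d) :
    (∃ x y, a = HVert.q x ∧ b = HVert.q y) ∨ (∃ x y, c = HVert.q x ∧ d = HVert.q y) := by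
  simp only [GH_adj] at *
  cases a <;> cases b <;> cases c <;> cases d <;> simp_all [R]

lemma L2 {m n : ℕ} {S : Fin n → Set (Fin m)} {v w c d : HVert m n}
    (hv : ∀ x, v ≠ HVert.q x) (hw : ∀ x, w ≠ HVert.q x)
    (hc : ∀ x, c ≠ HVert.q x) (hd : ∀ x, d ≠ HVert.q x)
    (hcd : (GH m n S).Adj c d)
    (hvw : ¬ (GH m n S).Adj v w) (hvc : ¬ (GH m n S).Adj v c)
    (hvd : ¬ (GH m n S).Adj v d) (hwc : ¬ (GH m n S).Adj w c)
    (hwd : ¬ (GH m n S).Adj w d)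
    (nvw : v ≠ w) (nvc : v ≠ c) (nvd : v ≠ d) (nwc : w ≠ c) (nwd : w ≠ d) :
    False := by
  simp only [GH_adj] at *
  cases v <;> cases w <;> cases c <;> cases d <;> simp_all [R]

lemma Madj {m n : ℕ} {S : Fin n → Set (Fin m)} {x y : Fin m} (h : x ≠ y) :
    (GH m n S).Adj (HVert.q x) (HVert.q y) := by
  simp [GH_adj, R, h]

lemma notQ {m n : ℕ} {S : Fin n → Set (Fin m)} {u : HVert m n} {x : Fin m}
    (hadj : ¬ (GH m n S).Adj u (HVert.q x)) (hne : u ≠ HVert.q x) :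
    ∀ z, u ≠ HVert.q z := by
  rintro z rfl
  rcases eq_or_ne z x with rfl | h
  · exact hne rfl
  · exact hadj (Madj h)

lemma twoQQ {m n : ℕ} {S : Fin n → Set (Fin m)} {x y : Fin m}
    (hadj : ¬ (GH m n S).Adj (HVert.q x) (HVert.q y))
    (hne : (HVert.q x : HVert m n) ≠ HVert.q y) : False := by
  exact hadj (Madj (fun h => hne (by rw [h])))

theorem stmt_13 (m n : ℕ) (S : Fin (n + 1) → Set (Fin m))
    (hS : ∀ j, (S j).Nonempty) (hlast : S (Fin.last n) = Set.univ) :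
    -- `G_𝓗` is `(2P_1 + 2P_2)`-free
    IsEmpty ((((⊥ : SimpleGraph (Fin 2)) ⊕g (pathGraph 2 ⊕g pathGraph 2))) ↪g GH m (n + 1) S) ∧
    -- `G_𝓗` is `3P_2`-free
    IsEmpty ((pathGraph 2 ⊕g (pathGraph 2 ⊕g pathGraph 2)) ↪g GH m (n + 1) S) ∧
    -- `G_𝓗` is `2P_3`-free
    IsEmpty ((pathGraph 3 ⊕g pathGraph 3) ↪g GH m (n + 1) S) := by
  refine ⟨⟨fun f => ?_⟩, ⟨fun f => ?_⟩, ⟨fun f => ?_⟩⟩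
  · -- 2P_1 + 2P_2
    set G := GH m (n + 1) S
    have key : ∀ u v, ¬ (((⊥ : SimpleGraph (Fin 2)) ⊕g (pathGraph 2 ⊕g pathGraph 2))).Adj u v →
        ¬ G.Adj (f u) (f v) := fun u v h h' => h (f.map_rel_iff.mp h')
    have inj : ∀ u v : (Fin 2) ⊕ (Fin 2 ⊕ Fin 2), u ≠ v → f u ≠ f v :=
      fun u v h h' => h (f.injective h')
    have hab : G.Adj (f (Sum.inr (Sum.inl 0))) (f (Sum.inr (Sum.inl 1))) :=
      f.map_rel_iff.mpr (by simp [pathGraph_adj])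
    have hcd : G.Adj (f (Sum.inr (Sum.inr 0))) (f (Sum.inr (Sum.inr 1))) :=
      f.map_rel_iff.mpr (by simp [pathGraph_adj])
    have hvw := key (Sum.inl 0) (Sum.inl 1) (by simp)
    have hva := key (Sum.inl 0) (Sum.inr (Sum.inl 0)) (by simp)
    have hvb := key (Sum.inl 0) (Sum.inr (Sum.inl 1)) (by simp)
    have hvc := key (Sum.inl 0) (Sum.inr (Sum.inr 0)) (by simp)
    have hvd := key (Sum.inl 0) (Sum.inr (Sum.inr 1)) (by simp)
    have hwa := key (Sum.inl 1) (Sum.inr (Sum.inl 0)) (by simp)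
    have hwb := key (Sum.inl 1) (Sum.inr (Sum.inl 1)) (by simp)
    have hwc := key (Sum.inl 1) (Sum.inr (Sum.inr 0)) (by simp)
    have hwd := key (Sum.inl 1) (Sum.inr (Sum.inr 1)) (by simp)
    have hac := key (Sum.inr (Sum.inl 0)) (Sum.inr (Sum.inr 0)) (by simp)
    have had := key (Sum.inr (Sum.inl 0)) (Sum.inr (Sum.inr 1)) (by simp)
    have hbc := key (Sum.inr (Sum.inl 1)) (Sum.inr (Sum.inr 0)) (by simp)
    have hbd := key (Sum.inr (Sum.inl 1)) (Sum.inr (Sum.inr 1)) (by simp)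
    rcases L hab hcd hac had hbc hbd with ⟨x, y, ha, hb⟩ | ⟨x, y, hc2, hd2⟩
    · exact L2 (notQ (fun h => hva (by rw [ha]; exact h))
          (fun h => inj (Sum.inl 0) (Sum.inr (Sum.inl 0)) (by simp) (h.trans ha.symm)))
        (notQ (fun h => hwa (by rw [ha]; exact h))
          (fun h => inj (Sum.inl 1) (Sum.inr (Sum.inl 0)) (by simp) (h.trans ha.symm)))
        (notQ (fun h => hac (by rw [ha]; exact h.symm))
          (fun h => inj (Sum.inr (Sum.inl 0)) (Sum.inr (Sum.inr 0)) (by simp) (ha.trans h.symm)))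
        (notQ (fun h => had (by rw [ha]; exact h.symm))
          (fun h => inj (Sum.inr (Sum.inl 0)) (Sum.inr (Sum.inr 1)) (by simp) (ha.trans h.symm)))
        hcd hvw hvc hvd hwc hwd
        (inj _ _ (by simp)) (inj _ _ (by simp)) (inj _ _ (by simp))
        (inj _ _ (by simp)) (inj _ _ (by simp))
    · exact L2 (notQ (fun h => hvc (by rw [hc2]; exact h))
          (fun h => inj (Sum.inl 0) (Sum.inr (Sum.inr 0)) (by simp) (h.trans hc2.symm)))
        (notQ (fun h => hwc (by rw [hc2]; exact h))
          (fun h => inj (Sum.inl 1) (Sum.inr (Sum.inr 0)) (by simp) (h.trans hc2.symm)))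
        (notQ (fun h => hac (by rw [hc2]; exact h))
          (fun h => inj (Sum.inr (Sum.inl 0)) (Sum.inr (Sum.inr 0)) (by simp) (h.trans hc2.symm)))
        (notQ (fun h => hbc (by rw [hc2]; exact h))
          (fun h => inj (Sum.inr (Sum.inl 1)) (Sum.inr (Sum.inr 0)) (by simp) (h.trans hc2.symm)))
        hab hvw hva hvb hwa hwb
        (inj _ _ (by simp)) (inj _ _ (by simp)) (inj _ _ (by simp))
        (inj _ _ (by simp)) (inj _ _ (by simp))
  · -- 3P_2
    set G := GH m (n + 1) S
    have key : ∀ u v, ¬ ((pathGraph 2 ⊕g (pathGraph 2 ⊕g pathGraph 2))).Adj u v →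
        ¬ G.Adj (f u) (f v) := fun u v h h' => h (f.map_rel_iff.mp h')
    have inj : ∀ u v : (Fin 2) ⊕ (Fin 2 ⊕ Fin 2), u ≠ v → f u ≠ f v :=
      fun u v h h' => h (f.injective h')
    have hab : G.Adj (f (Sum.inl 0)) (f (Sum.inl 1)) :=
      f.map_rel_iff.mpr (by simp [pathGraph_adj])
    have hcd : G.Adj (f (Sum.inr (Sum.inl 0))) (f (Sum.inr (Sum.inl 1))) :=
      f.map_rel_iff.mpr (by simp [pathGraph_adj])
    have heg : G.Adj (f (Sum.inr (Sum.inr 0))) (f (Sum.inr (Sum.inr 1))) :=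
      f.map_rel_iff.mpr (by simp [pathGraph_adj])
    have hac := key (Sum.inl 0) (Sum.inr (Sum.inl 0)) (by simp)
    have had := key (Sum.inl 0) (Sum.inr (Sum.inl 1)) (by simp)
    have hbc := key (Sum.inl 1) (Sum.inr (Sum.inl 0)) (by simp)
    have hbd := key (Sum.inl 1) (Sum.inr (Sum.inl 1)) (by simp)
    have hae := key (Sum.inl 0) (Sum.inr (Sum.inr 0)) (by simp)
    have hag := key (Sum.inl 0) (Sum.inr (Sum.inr 1)) (by simp)
    have hbe := key (Sum.inl 1) (Sum.inr (Sum.inr 0)) (by simp)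
    have hbg := key (Sum.inl 1) (Sum.inr (Sum.inr 1)) (by simp)
    have hce := key (Sum.inr (Sum.inl 0)) (Sum.inr (Sum.inr 0)) (by simp)
    have hcg := key (Sum.inr (Sum.inl 0)) (Sum.inr (Sum.inr 1)) (by simp)
    have hde := key (Sum.inr (Sum.inl 1)) (Sum.inr (Sum.inr 0)) (by simp)
    have hdg := key (Sum.inr (Sum.inl 1)) (Sum.inr (Sum.inr 1)) (by simp)
    rcases L hab hcd hac had hbc hbd with ⟨x, y, ha, hb⟩ | ⟨x, y, hc, hd⟩
    · rcases L hcd heg hce hcg hde hdg with ⟨x2, y2, hc, hd⟩ | ⟨x2, y2, he, hg⟩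
      · exact twoQQ (by rw [← ha, ← hc]; exact hac)
          (fun h => inj _ _ (by simp) (ha.trans (h.trans hc.symm)))
      · exact twoQQ (by rw [← ha, ← he]; exact hae)
          (fun h => inj _ _ (by simp) (ha.trans (h.trans he.symm)))
    · rcases L hab heg hae hag hbe hbg with ⟨x2, y2, ha, hb⟩ | ⟨x2, y2, he, hg⟩
      · exact twoQQ (by rw [← ha, ← hc]; exact hac)
          (fun h => inj _ _ (by simp) (ha.trans (h.trans hc.symm)))
      · exact twoQQ (by rw [← hc, ← he]; exact hce)
          (fun h => inj _ _ (by simp) (hc.trans (h.trans he.symm)))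
  · -- 2P_3
    set G := GH m (n + 1) S
    have key : ∀ u v, ¬ ((pathGraph 3 ⊕g pathGraph 3)).Adj u v →
        ¬ G.Adj (f u) (f v) := fun u v h h' => h (f.map_rel_iff.mp h')
    have inj : ∀ u v : (Fin 3) ⊕ (Fin 3), u ≠ v → f u ≠ f v :=
      fun u v h h' => h (f.injective h')
    have hab : G.Adj (f (Sum.inl 0)) (f (Sum.inl 1)) :=
      f.map_rel_iff.mpr (by simp [pathGraph_adj])
    have hbc : G.Adj (f (Sum.inl 1)) (f (Sum.inl 2)) :=
      f.map_rel_iff.mpr (by simp [pathGraph_adj])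
    have hab' : G.Adj (f (Sum.inr 0)) (f (Sum.inr 1)) :=
      f.map_rel_iff.mpr (by simp [pathGraph_adj])
    have hbc' : G.Adj (f (Sum.inr 1)) (f (Sum.inr 2)) :=
      f.map_rel_iff.mpr (by simp [pathGraph_adj])
    have hac := key (Sum.inl 0) (Sum.inl 2) (by simp [pathGraph_adj])
    have hac' := key (Sum.inr 0) (Sum.inr 2) (by simp [pathGraph_adj])
    have h00 := key (Sum.inl 0) (Sum.inr 0) (by simp)
    have h01 := key (Sum.inl 0) (Sum.inr 1) (by simp)
    have h02 := key (Sum.inl 0) (Sum.inr 2) (by simp)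
    have h10 := key (Sum.inl 1) (Sum.inr 0) (by simp)
    have h11 := key (Sum.inl 1) (Sum.inr 1) (by simp)
    have h12 := key (Sum.inl 1) (Sum.inr 2) (by simp)
    have h20 := key (Sum.inl 2) (Sum.inr 0) (by simp)
    have h21 := key (Sum.inl 2) (Sum.inr 1) (by simp)
    rcases L hab hab' h00 h01 h10 h11 with ⟨x, y, ha, hb⟩ | ⟨x, y, ha', hb'⟩
    · rcases L hbc hab' h10 h11 h20 h21 with ⟨x2, y2, hb2, hc2⟩ | ⟨x2, y2, ha'2, hb'2⟩
      · exact twoQQ (by rw [← ha, ← hc2]; exact hac)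
          (fun h => inj _ _ (by simp) (ha.trans (h.trans hc2.symm)))
      · exact twoQQ (by rw [← ha, ← ha'2]; exact h00)
          (fun h => inj _ _ (by simp) (ha.trans (h.trans ha'2.symm)))
    · rcases L hbc' hab (fun h => h01 h.symm) (fun h => h11 h.symm)
          (fun h => h02 h.symm) (fun h => h12 h.symm) with
          ⟨x2, y2, hb'2, hc'2⟩ | ⟨x2, y2, ha2, hb2⟩
      · exact twoQQ (by rw [← ha', ← hc'2]; exact hac')
          (fun h => inj _ _ (by simp) (ha'.trans (h.trans hc'2.symm)))
      · exact twoQQ (by rw [← ha2, ← ha']; exact h00)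
          (fun h => inj _ _ (by simp) (ha2.trans (h.trans ha'.symm)))
end

section
/- Let 𝓗 be a hypergraph in which every hyperedge is nonempty and S_n = Q. Then the graph G_𝓗 is P_6-free. -/
open SimpleGraph

/-- Kind pairs that can possibly be adjacent in `G_𝓗`
(kinds: `0` = q, `1` = S, `2` = S', `3` = t1, `4` = t2). -/
def allowedB : Fin 5 → Fin 5 → Bool := fun a b =>
  (a, b) ∈ [((0:Fin 5),(0:Fin 5)),(0,1),(1,0),(0,2),(2,0),(1,2),(2,1),(1,3),(3,1),(2,4),(4,2)]

/-- Kind pairs that are always adjacent in `G_𝓗` when the vertices are distinct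
(together with the impossible pairs `(3,3)` and `(4,4)`). -/
def forcedB : Fin 5 → Fin 5 → Bool := fun a b =>
  (a, b) ∈ [((0:Fin 5),(0:Fin 5)),(1,2),(2,1),(1,3),(3,1),(2,4),(4,2),(3,3),(4,4)]

/-- The kind of a vertex of `G_𝓗`. -/
def kd {m n : ℕ} : HVert m n → Fin 5
  | .q _ => 0
  | .S _ => 1
  | .S' _ => 2
  | .t1 => 3
  | .t2 => 4

lemma adj_allowed {m n : ℕ} {S : Fin n → Set (Fin m)} {a b : HVert m n}
    (h : (GH m n S).Adj a b) : allowedB (kd a) (kd b) = true := by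
  rw [GH, fromRel_adj] at h
  obtain ⟨-, h⟩ := h
  cases a <;> cases b <;> simp_all [kd, allowedB]

lemma forced_adj {m n : ℕ} {S : Fin n → Set (Fin m)} {a b : HVert m n}
    (hne : a ≠ b) (hf : forcedB (kd a) (kd b) = true) : (GH m n S).Adj a b := by
  rw [GH, fromRel_adj]
  refine ⟨hne, ?_⟩
  cases a <;> cases b <;> simp only [kd] at hf <;>
    first
    | exact absurd hf (by decide)
    | exact Or.inl trivial
    | exact Or.inr trivial
    | exact absurd rfl hne

/-- The pattern of kinds along a valid induced 6-vertex path. -/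
def chk (a b c d e f : Fin 5) : Bool :=
  allowedB a b && allowedB b c && allowedB c d && allowedB d e && allowedB e f &&
  !forcedB a c && !forcedB a d && !forcedB a e && !forcedB a f &&
  !forcedB b d && !forcedB b e && !forcedB b f &&
  !forcedB c e && !forcedB c f && !forcedB d f

lemma no_good : ∀ a b c d e f : Fin 5, chk a b c d e f = false := by decide

lemma emb_allowed {m n : ℕ} {S : Fin n → Set (Fin m)}
    (e : pathGraph 6 ↪g GH m n S) (i j : Fin 6)
    (h : i.val + 1 = j.val ∨ j.val + 1 = i.val) :
    allowedB (kd (e i)) (kd (e j)) = true :=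
  adj_allowed (e.map_rel_iff.2 (pathGraph_adj.2 h))

lemma emb_notforced {m n : ℕ} {S : Fin n → Set (Fin m)}
    (e : pathGraph 6 ↪g GH m n S) (i j : Fin 6) (hij : i ≠ j)
    (h : ¬ (i.val + 1 = j.val ∨ j.val + 1 = i.val)) :
    forcedB (kd (e i)) (kd (e j)) = false := by
  by_contra hf
  rw [Bool.not_eq_false] at hf
  exact h (pathGraph_adj.1 (e.map_rel_iff.1
    (forced_adj (fun heq => hij (e.injective heq)) hf)))

theorem stmt_14 (m n : ℕ) (S : Fin (n + 1) → Set (Fin m))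
    (hS : ∀ j, (S j).Nonempty) (hlast : S (Fin.last n) = Set.univ) :
    IsEmpty (pathGraph 6 ↪g GH m (n + 1) S) := by
  constructor
  intro e
  have hc : chk (kd (e 0)) (kd (e 1)) (kd (e 2)) (kd (e 3)) (kd (e 4)) (kd (e 5)) = true := by
    rw [chk,
      emb_allowed e 0 1 (by decide), emb_allowed e 1 2 (by decide),
      emb_allowed e 2 3 (by decide), emb_allowed e 3 4 (by decide),
      emb_allowed e 4 5 (by decide),
      emb_notforced e 0 2 (by decide) (by decide),
      emb_notforced e 0 3 (by decide) (by decide),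
      emb_notforced e 0 4 (by decide) (by decide),
      emb_notforced e 0 5 (by decide) (by decide),
      emb_notforced e 1 3 (by decide) (by decide),
      emb_notforced e 1 4 (by decide) (by decide),
      emb_notforced e 1 5 (by decide) (by decide),
      emb_notforced e 2 4 (by decide) (by decide),
      emb_notforced e 2 5 (by decide) (by decide),
      emb_notforced e 3 5 (by decide) (by decide)]
    rfl
  rw [no_good] at hc
  exact absurd hc (by simp)
end

section
/- Let 𝓗 be a hypergraph in which every hyperedge is nonempty and S_n = Q, and let G′_𝓗 be the graph obtained from G_𝓗 by adding the edge t_1t_2. Then G′_𝓗 is (P_2+P_4)-free. -/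
open SimpleGraph

/-- The graph `G'_𝓗` obtained from `G_𝓗` by adding the edge `t1 t2`. -/
def GH' (m n : ℕ) (S : Fin n → Set (Fin m)) : SimpleGraph (HVert m n) :=
  GH m n S ⊔ SimpleGraph.fromRel (fun a b => a = HVert.t1 ∧ b = HVert.t2)

/-- whether a vertex is an element vertex -/
def HVert.isQ {m n : ℕ} : HVert m n → Prop
  | .q _ => True
  | _ => False

/-- side function on non-element vertices -/
def HVert.sig {m n : ℕ} : HVert m n → Bool
  | .q _ => false
  | .S _ => false
  | .t2 => false
  | .S' _ => true
  | .t1 => true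

lemma GH'_adj_nonQ {m n : ℕ} (S : Fin n → Set (Fin m)) (u v : HVert m n)
    (hu : ¬ u.isQ) (hv : ¬ v.isQ) :
    (GH' m n S).Adj u v ↔ u ≠ v ∧ u.sig ≠ v.sig := by
  cases u <;> cases v <;>
    simp_all [GH', GH, HVert.isQ, HVert.sig, SimpleGraph.fromRel_adj]

lemma GH'_adj_qq {m n : ℕ} (S : Fin n → Set (Fin m)) (x y : Fin m) (h : x ≠ y) :
    (GH' m n S).Adj (.q x) (.q y) := by
  simp [GH', GH, SimpleGraph.fromRel_adj, h]

theorem stmt_16 (m n : ℕ) (S : Fin (n + 1) → Set (Fin m))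
    (hS : ∀ j, (S j).Nonempty) (hlast : S (Fin.last n) = Set.univ) :
    IsEmpty ((pathGraph 2 ⊕g pathGraph 4) ↪g GH' m (n + 1) S) := by
  constructor
  intro f
  set G := GH' m (n + 1) S with hG
  have hmap : ∀ u v, G.Adj (f u) (f v) ↔ (pathGraph 2 ⊕g pathGraph 4).Adj u v :=
    fun u v => f.map_adj_iff
  have hinj : Function.Injective f := f.injective
  set a := f (Sum.inl 0) with ha
  set b := f (Sum.inl 1) with hb
  set p : Fin 4 → HVert m (n + 1) := fun i => f (Sum.inr i) with hp
  have hab : G.Adj a b := (hmap _ _).2 (by simp [pathGraph_adj])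
  have hcross : ∀ (k : Fin 2) (i : Fin 4), ¬ G.Adj (f (Sum.inl k)) (p i) := by
    intro k i h
    rw [hmap] at h
    simp at h
  have hpadj : ∀ i j : Fin 4, (i.val + 1 = j.val ∨ j.val + 1 = i.val) → G.Adj (p i) (p j) := by
    intro i j hij
    exact (hmap _ _).2 (by simp [pathGraph_adj, hij])
  have hpnadj : ∀ i j : Fin 4, ¬(i.val + 1 = j.val ∨ j.val + 1 = i.val) → ¬ G.Adj (p i) (p j) := by
    intro i j hij h
    rw [hmap] at h
    simp [pathGraph_adj] at h
    tauto
  have hpne : ∀ i j : Fin 4, i ≠ j → p i ≠ p j := by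
    intro i j hij h
    exact hij (Sum.inr.inj (hinj h))
  have hpa : ∀ (k : Fin 2) (i : Fin 4), p i ≠ f (Sum.inl k) := by
    intro k i h
    exact absurd (hinj h) (by simp)
  -- case: all four path vertices non-Q
  have caseR : (∀ i : Fin 4, ¬ (p i).isQ) → False := by
    intro hR
    have h01 : (p 0).sig ≠ (p 1).sig :=
      ((GH'_adj_nonQ S _ _ (hR 0) (hR 1)).1 (hpadj 0 1 (by decide))).2
    have h12 : (p 1).sig ≠ (p 2).sig :=
      ((GH'_adj_nonQ S _ _ (hR 1) (hR 2)).1 (hpadj 1 2 (by decide))).2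
    have h23 : (p 2).sig ≠ (p 3).sig :=
      ((GH'_adj_nonQ S _ _ (hR 2) (hR 3)).1 (hpadj 2 3 (by decide))).2
    have h03 : (p 0).sig ≠ (p 3).sig := by
      intro h
      rw [h] at h01
      rcases Bool.eq_false_or_eq_true (p 3).sig <;> rcases Bool.eq_false_or_eq_true (p 1).sig <;>
        rcases Bool.eq_false_or_eq_true (p 2).sig <;> simp_all
    exact hpnadj 0 3 (by decide)
      ((GH'_adj_nonQ S _ _ (hR 0) (hR 3)).2 ⟨hpne 0 3 (by decide), h03⟩)
  -- if a or b is a q vertex, all p i are non-Q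
  have caseQside : ∀ (k : Fin 2) (x : Fin m), f (Sum.inl k) = .q x → False := by
    intro k x hk
    apply caseR
    intro i
    cases hpi : p i with
    | q y =>
        exact absurd (hG ▸ GH'_adj_qq S x y
          (fun h => hpa k i (by rw [hpi, hk, h])) )
          (by rw [← hk, ← hpi] at *; exact fun h => hcross k i h)
    | S j => simp [HVert.isQ]
    | S' j => simp [HVert.isQ]
    | t1 => simp [HVert.isQ]
    | t2 => simp [HVert.isQ]
  -- main case analysis
  have hnQa : ¬ a.isQ := by
    cases haq : a with
    | q x => exact absurd (caseQside 0 x (ha ▸ haq)) id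
    | S j => simp [HVert.isQ]
    | S' j => simp [HVert.isQ]
    | t1 => simp [HVert.isQ]
    | t2 => simp [HVert.isQ]
  have hnQb : ¬ b.isQ := by
    cases hbq : b with
    | q x => exact absurd (caseQside 1 x (hb ▸ hbq)) id
    | S j => simp [HVert.isQ]
    | S' j => simp [HVert.isQ]
    | t1 => simp [HVert.isQ]
    | t2 => simp [HVert.isQ]
  have hsab : a.sig ≠ b.sig := ((GH'_adj_nonQ S _ _ hnQa hnQb).1 hab).2
  -- every p i must be a q vertex
  have hallQ : ∀ i : Fin 4, (p i).isQ := by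
    intro i
    by_contra hni
    have hia : (p i).sig ≠ a.sig ∨ (p i).sig ≠ b.sig := by
      by_contra h
      push_neg at h
      exact hsab (h.1 ▸ h.2 ▸ rfl)
    rcases hia with h | h
    · exact hcross 0 i (((GH'_adj_nonQ S _ _ hnQa hni).2 ⟨fun hh => hpa 0 i hh.symm, fun hh => h hh.symm⟩))
    · exact hcross 1 i (((GH'_adj_nonQ S _ _ hnQb hni).2 ⟨fun hh => hpa 1 i hh.symm, fun hh => h hh.symm⟩))
  -- then p 0 and p 3 are distinct q's, hence adjacent: contradiction
  cases h0 : p 0 with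
  | q x =>
    cases h3 : p 3 with
    | q y =>
        have hxy : x ≠ y := fun h => hpne 0 3 (by decide) (by rw [h0, h3, h])
        exact hpnadj 0 3 (by decide) (h0 ▸ h3 ▸ hG ▸ GH'_adj_qq S x y hxy)
    | S j => exact absurd (hallQ 3) (by rw [h3]; simp [HVert.isQ])
    | S' j => exact absurd (hallQ 3) (by rw [h3]; simp [HVert.isQ])
    | t1 => exact absurd (hallQ 3) (by rw [h3]; simp [HVert.isQ])
    | t2 => exact absurd (hallQ 3) (by rw [h3]; simp [HVert.isQ])
  | S j => exact absurd (hallQ 0) (by rw [h0]; simp [HVert.isQ])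
  | S' j => exact absurd (hallQ 0) (by rw [h0]; simp [HVert.isQ])
  | t1 => exact absurd (hallQ 0) (by rw [h0]; simp [HVert.isQ])
  | t2 => exact absurd (hallQ 0) (by rw [h0]; simp [HVert.isQ])
end
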